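/- arXiv:math/9911091 — 2 statements merged into one kernel-verified Lean document; each statement's English description precedes it below -/
import Mathlib

section
/- In the standard setup for a finite-dimensional Hopf algebra H over ℂ with positive basis B: for every g₊ ∈ G₊ and g₋ ∈ G₋, the coproduct Δ(e_{g₋}) contains exactly one term c⊗b with α₊(c) = g₊⁻¹ and α₊(b) = g₊, and this b is the unique element of B with α₊(b) = g₊ and β₋(b) = g₋. Consequently the map b ↦ (α₊(b), β₋(b)) is a bijection from B onto G₊ × G₋; likewise the map b ↦ (β₊(b), α₋(b)) is a bijection from B onto G₊ × G₋. -/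
open scoped TensorProduct ComplexOrder

structure IsPositiveBasis {H : Type*} [Ring H] [HopfAlgebra ℂ H] {ι : Type*}
    (B : Module.Basis ι ℂ H) : Prop where
  one_nonneg : ∀ i, 0 ≤ B.repr 1 i
  counit_nonneg : ∀ i, 0 ≤ Coalgebra.counit (R := ℂ) (B i)
  mul_nonneg : ∀ i j k, 0 ≤ B.repr (B i * B j) k
  comul_nonneg : ∀ i j k,
    0 ≤ (B.tensorProduct B).repr (Coalgebra.comul (R := ℂ) (B i)) (j, k)
  antipode_nonneg : ∀ i j, 0 ≤ B.repr (HopfAlgebra.antipode (R := ℂ) (B i)) j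

/-- The first part of the standard setup: a positive basis `B` of `H`, scaled so that
`1 = ∑_{g₊ ∈ G₊} d_{g₊}` with the `d_{g₊} ∈ B` distinct elements indexed by a finite
group `G₊`, whose span is the Hopf subalgebra `(ℂ G₊)*`. -/
structure SetupPlus (H : Type*) [Ring H] [HopfAlgebra ℂ H] (ι : Type*) [Fintype ι]
    (Gp : Type*) [Group Gp] [Fintype Gp] where
  B : Module.Basis ι ℂ H
  pos : IsPositiveBasis B
  d : Gp → ι
  d_inj : Function.Injective d
  one_eq : (1 : H) = ∑ g : Gp, B (d g)
  d_mul_self : ∀ g : Gp, B (d g) * B (d g) = B (d g)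
  d_mul_ne : ∀ g h : Gp, g ≠ h → B (d g) * B (d h) = 0
  d_comul : ∀ g : Gp, Coalgebra.comul (R := ℂ) (B (d g)) =
    ∑ h : Gp, B (d h) ⊗ₜ[ℂ] B (d (h⁻¹ * g))
  d_antipode : ∀ g : Gp, HopfAlgebra.antipode (R := ℂ) (B (d g)) = B (d g⁻¹)
  d_counit_one : Coalgebra.counit (R := ℂ) (B (d 1)) = 1
  d_counit_ne : ∀ g : Gp, g ≠ 1 → Coalgebra.counit (R := ℂ) (B (d g)) = 0

/-- The full standard setup: in addition the basis is scaled so that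
`ε = ∑_{b ∈ G₋} b*`, where `G₋ = {b ∈ B : ε(b) ≠ 0}` is closed under the
multiplication of `H` and forms a group (with identity `d_e`), whose elements are
`e_{g₋}` for `g₋` in a finite group `G₋`. -/
structure SetupFull (H : Type*) [Ring H] [HopfAlgebra ℂ H] (ι : Type*) [Fintype ι]
    (Gp : Type*) [Group Gp] [Fintype Gp] (Gn : Type*) [Group Gn] [Fintype Gn] extends
    SetupPlus H ι Gp where
  en : Gn → ι
  en_inj : Function.Injective en
  en_range : ∀ i : ι, Coalgebra.counit (R := ℂ) (B i) ≠ 0 ↔ ∃ x : Gn, en x = i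
  en_counit : ∀ x : Gn, Coalgebra.counit (R := ℂ) (B (en x)) = 1
  en_mul : ∀ x y : Gn, B (en x) * B (en y) = B (en (x * y))
  en_one : en 1 = d 1

section
variable {H : Type*} [Ring H] [HopfAlgebra ℂ H] {ι : Type*} [Fintype ι]
  {Gp : Type*} [Group Gp] [Fintype Gp] {Gn : Type*} [Group Gn] [Fintype Gn]

/-- `α₊(b) = g₊`, i.e. `d_{g₊} b = b`. -/
def IsAlphaPlus (S : SetupPlus H ι Gp) (i : ι) (g : Gp) : Prop :=
  S.B (S.d g) * S.B i = S.B i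

/-- `β₊(b) = g₊`, i.e. `b d_{g₊} = b`. -/
def IsBetaPlus (S : SetupPlus H ι Gp) (i : ι) (g : Gp) : Prop :=
  S.B i * S.B (S.d g) = S.B i

/-- `α₋(b) = g₋`: the only term of `Δ(b)` lying in `G₋ ⊗ B` is `e_{g₋} ⊗ b`,
and it has coefficient `1`. -/
def IsAlphaMinus (S : SetupFull H ι Gp Gn) (i : ι) (x : Gn) : Prop :=
  (S.B.tensorProduct S.B).repr (Coalgebra.comul (R := ℂ) (S.B i)) (S.en x, i) = 1 ∧
  ∀ (y : Gn) (j : ι), ¬(y = x ∧ j = i) →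
    (S.B.tensorProduct S.B).repr (Coalgebra.comul (R := ℂ) (S.B i)) (S.en y, j) = 0

/-- `β₋(b) = g₋`: the only term of `Δ(b)` lying in `B ⊗ G₋` is `b ⊗ e_{g₋}`,
and it has coefficient `1`. -/
def IsBetaMinus (S : SetupFull H ι Gp Gn) (i : ι) (x : Gn) : Prop :=
  (S.B.tensorProduct S.B).repr (Coalgebra.comul (R := ℂ) (S.B i)) (i, S.en x) = 1 ∧
  ∀ (y : Gn) (j : ι), ¬(y = x ∧ j = i) →
    (S.B.tensorProduct S.B).repr (Coalgebra.comul (R := ℂ) (S.B i)) (j, S.en y) = 0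

end

section Aux

namespace LYZ

attribute [local instance] Classical.propDecidable

variable {H : Type} [Ring H] [HopfAlgebra ℂ H] {ι : Type} [Fintype ι]
  {Gp : Type} [Group Gp] [Fintype Gp] {Gn : Type} [Group Gn] [Fintype Gn]
  (S : SetupFull H ι Gp Gn)

/-- coefficient functional on `H` -/
noncomputable def co (l : ι) : H →ₗ[ℂ] ℂ := S.B.coord l

/-- coefficient functional on `H ⊗ H` -/
noncomputable def co2 (p : ι × ι) : (H ⊗[ℂ] H) →ₗ[ℂ] ℂ := (S.B.tensorProduct S.B).coord p

/-- comultiplication coefficients -/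
noncomputable def NN (i : ι) (p : ι × ι) : ℂ :=
  (S.B.tensorProduct S.B).repr (Coalgebra.comul (R := ℂ) (S.B i)) p

lemma co_apply (x : H) (l : ι) : co S l x = S.B.repr x l := rfl

lemma co2_apply (Z : H ⊗[ℂ] H) (p : ι × ι) :
    co2 S p Z = (S.B.tensorProduct S.B).repr Z p := rfl

lemma NN_eq (i : ι) (p : ι × ι) : NN S i p = co2 S p (Coalgebra.comul (R := ℂ) (S.B i)) := rfl

lemma co_B (i l : ι) : co S l (S.B i) = if i = l then 1 else 0 := by
  rw [co_apply, S.B.repr_self_apply]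

lemma co2_tmul (x y : H) (p : ι × ι) :
    co2 S p (x ⊗ₜ[ℂ] y) = co S p.1 x * co S p.2 y := by
  obtain ⟨a, b⟩ := p
  rw [co2_apply, Module.Basis.tensorProduct_repr_tmul_apply]
  simp [co_apply, mul_comm]

lemma co2_tmul_B (u v : ι) (p : ι × ι) :
    co2 S p (S.B u ⊗ₜ[ℂ] S.B v) = if u = p.1 ∧ v = p.2 then 1 else 0 := by
  rw [co2_tmul, co_B, co_B]
  by_cases h1 : u = p.1 <;> by_cases h2 : v = p.2 <;> simp [h1, h2]

lemma expand_H (x : H) : x = ∑ l, co S l x • S.B l := (S.B.sum_repr x).symm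

lemma expand_HH (Z : H ⊗[ℂ] H) :
    Z = ∑ p : ι × ι, co2 S p Z • (S.B p.1 ⊗ₜ[ℂ] S.B p.2) := by
  conv_lhs => rw [← (S.B.tensorProduct S.B).sum_repr Z]
  refine Finset.sum_congr rfl fun p _ => ?_
  rw [Module.Basis.tensorProduct_apply', co2_apply]

lemma comul_B (i : ι) : Coalgebra.comul (R := ℂ) (S.B i) =
    ∑ p : ι × ι, NN S i p • (S.B p.1 ⊗ₜ[ℂ] S.B p.2) := expand_HH S _

lemma NN_nonneg (i : ι) (p : ι × ι) : 0 ≤ NN S i p := S.pos.comul_nonneg i p.1 p.2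

lemma B_ne (i : ι) : S.B i ≠ 0 := by
  intro h
  have := co_B S i i
  rw [h] at this
  simp at this

lemma ee_mul_ee (x y : Gn) : S.B (S.en x) * S.B (S.en y) = S.B (S.en (x*y)) := S.en_mul x y

lemma d1_eq_en1 : S.B (S.d 1) = S.B (S.en 1) := by rw [S.en_one]

lemma eps_en (z : Gn) : Coalgebra.counit (R := ℂ) (S.B (S.en z)) = 1 := S.en_counit z

lemma eps_of_not_en (i : ι) (h : ∀ z : Gn, S.en z ≠ i) :
    Coalgebra.counit (R := ℂ) (S.B i) = 0 := by
  by_contra hne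
  obtain ⟨z, hz⟩ := (S.en_range i).1 hne
  exact h z hz

end LYZ

end Aux

section Aux2

namespace LYZ

attribute [local instance] Classical.propDecidable

variable {H : Type} [Ring H] [HopfAlgebra ℂ H] {ι : Type} [Fintype ι]
  {Gp : Type} [Group Gp] [Fintype Gp] {Gn : Type} [Group Gn] [Fintype Gn]
  (S : SetupFull H ι Gp Gn)

lemma exists_alpha (i : ι) :
    ∃ g : Gp, S.B (S.d g) * S.B i = S.B i ∧ ∀ h : Gp, h ≠ g → S.B (S.d h) * S.B i = 0 := by
  have hsum : ∀ l : ι, ∑ g : Gp, co S l (S.B (S.d g) * S.B i) = co S l (S.B i) := by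
    intro l
    calc ∑ g : Gp, co S l (S.B (S.d g) * S.B i)
        = co S l ((∑ g : Gp, S.B (S.d g)) * S.B i) := by
          rw [Finset.sum_mul, map_sum]
      _ = co S l (S.B i) := by rw [← S.one_eq, one_mul]
  have hzero : ∀ g : Gp, ∀ l : ι, l ≠ i → co S l (S.B (S.d g) * S.B i) = 0 := by
    intro g l hl
    have h0 : ∑ g : Gp, co S l (S.B (S.d g) * S.B i) = 0 := by
      rw [hsum l, co_B]
      simp [Ne.symm hl]
    exact (Finset.sum_eq_zero_iff_of_nonneg
      (fun g _ => S.pos.mul_nonneg (S.d g) i l)).1 h0 g (Finset.mem_univ g)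
  have hscal : ∀ g : Gp, S.B (S.d g) * S.B i = co S i (S.B (S.d g) * S.B i) • S.B i := by
    intro g
    conv_lhs => rw [expand_H S (S.B (S.d g) * S.B i)]
    rw [Finset.sum_eq_single i]
    · intro l _ hl
      rw [hzero g l hl, zero_smul]
    · intro h; exact absurd (Finset.mem_univ i) h
  set c : Gp → ℂ := fun g => co S i (S.B (S.d g) * S.B i) with hc
  have hsum1 : ∑ g : Gp, c g = 1 := by
    have := hsum i
    rw [co_B] at this
    simpa using this
  obtain ⟨g₀, hg₀⟩ : ∃ g : Gp, c g ≠ 0 := by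
    by_contra hall
    push_neg at hall
    rw [Finset.sum_congr rfl (fun g _ => hall g)] at hsum1
    simp at hsum1
  have hidem : c g₀ * c g₀ = c g₀ := by
    have hsc : S.B (S.d g₀) * S.B i = c g₀ • S.B i := hscal g₀
    have e1 : S.B (S.d g₀) * (S.B (S.d g₀) * S.B i) = (c g₀ * c g₀) • S.B i := by
      calc S.B (S.d g₀) * (S.B (S.d g₀) * S.B i)
          = S.B (S.d g₀) * (c g₀ • S.B i) := by rw [hsc]
        _ = c g₀ • (S.B (S.d g₀) * S.B i) := mul_smul_comm _ _ _
        _ = c g₀ • (c g₀ • S.B i) := by rw [hsc]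
        _ = (c g₀ * c g₀) • S.B i := smul_smul _ _ _
    have h1 : (c g₀ * c g₀) • S.B i = c g₀ • S.B i := by
      rw [← e1, ← mul_assoc, S.d_mul_self, hsc]
    have h2 := congrArg (co S i) h1
    rw [map_smul, map_smul, co_B, if_pos rfl, smul_eq_mul, smul_eq_mul, mul_one, mul_one] at h2
    exact h2
  have hone : c g₀ = 1 := by
    have h3 : c g₀ * c g₀ = 1 * c g₀ := by rw [one_mul]; exact hidem
    exact mul_right_cancel₀ hg₀ h3
  have hfix : S.B (S.d g₀) * S.B i = S.B i := by
    have hsc : S.B (S.d g₀) * S.B i = c g₀ • S.B i := hscal g₀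
    rw [hsc, hone, one_smul]
  refine ⟨g₀, hfix, fun h hne => ?_⟩
  have : S.B (S.d h) * S.B i = S.B (S.d h) * (S.B (S.d g₀) * S.B i) := by rw [hfix]
  rw [this, ← mul_assoc, S.d_mul_ne h g₀ hne, zero_mul]

end LYZ

end Aux2

section Aux3

namespace LYZ

attribute [local instance] Classical.propDecidable

variable {H : Type} [Ring H] [HopfAlgebra ℂ H] {ι : Type} [Fintype ι]
  {Gp : Type} [Group Gp] [Fintype Gp] {Gn : Type} [Group Gn] [Fintype Gn]
  (S : SetupFull H ι Gp Gn)

lemma exists_beta (i : ι) :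
    ∃ g : Gp, S.B i * S.B (S.d g) = S.B i ∧ ∀ h : Gp, h ≠ g → S.B i * S.B (S.d h) = 0 := by
  have hsum : ∀ l : ι, ∑ g : Gp, co S l (S.B i * S.B (S.d g)) = co S l (S.B i) := by
    intro l
    calc ∑ g : Gp, co S l (S.B i * S.B (S.d g))
        = co S l (S.B i * (∑ g : Gp, S.B (S.d g))) := by
          rw [Finset.mul_sum, map_sum]
      _ = co S l (S.B i) := by rw [← S.one_eq, mul_one]
  have hzero : ∀ g : Gp, ∀ l : ι, l ≠ i → co S l (S.B i * S.B (S.d g)) = 0 := by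
    intro g l hl
    have h0 : ∑ g : Gp, co S l (S.B i * S.B (S.d g)) = 0 := by
      rw [hsum l, co_B]
      simp [Ne.symm hl]
    exact (Finset.sum_eq_zero_iff_of_nonneg
      (fun g _ => S.pos.mul_nonneg i (S.d g) l)).1 h0 g (Finset.mem_univ g)
  have hscal : ∀ g : Gp, S.B i * S.B (S.d g) = co S i (S.B i * S.B (S.d g)) • S.B i := by
    intro g
    conv_lhs => rw [expand_H S (S.B i * S.B (S.d g))]
    rw [Finset.sum_eq_single i]
    · intro l _ hl
      rw [hzero g l hl, zero_smul]
    · intro h; exact absurd (Finset.mem_univ i) h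
  set c : Gp → ℂ := fun g => co S i (S.B i * S.B (S.d g)) with hc
  have hsum1 : ∑ g : Gp, c g = 1 := by
    have := hsum i
    rw [co_B] at this
    simpa using this
  obtain ⟨g₀, hg₀⟩ : ∃ g : Gp, c g ≠ 0 := by
    by_contra hall
    push_neg at hall
    rw [Finset.sum_congr rfl (fun g _ => hall g)] at hsum1
    simp at hsum1
  have hsc : S.B i * S.B (S.d g₀) = c g₀ • S.B i := hscal g₀
  have hidem : c g₀ * c g₀ = c g₀ := by
    have e1 : (S.B i * S.B (S.d g₀)) * S.B (S.d g₀) = (c g₀ * c g₀) • S.B i := by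
      calc (S.B i * S.B (S.d g₀)) * S.B (S.d g₀)
          = (c g₀ • S.B i) * S.B (S.d g₀) := by rw [hsc]
        _ = c g₀ • (S.B i * S.B (S.d g₀)) := smul_mul_assoc _ _ _
        _ = c g₀ • (c g₀ • S.B i) := by rw [hsc]
        _ = (c g₀ * c g₀) • S.B i := smul_smul _ _ _
    have h1 : (c g₀ * c g₀) • S.B i = c g₀ • S.B i := by
      rw [← e1, mul_assoc, S.d_mul_self, hsc]
    have h2 := congrArg (co S i) h1
    rw [map_smul, map_smul, co_B, if_pos rfl, smul_eq_mul, smul_eq_mul, mul_one, mul_one] at h2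
    exact h2
  have hone : c g₀ = 1 := by
    have h3 : c g₀ * c g₀ = 1 * c g₀ := by rw [one_mul]; exact hidem
    exact mul_right_cancel₀ hg₀ h3
  have hfix : S.B i * S.B (S.d g₀) = S.B i := by
    rw [hsc, hone, one_smul]
  refine ⟨g₀, hfix, fun h hne => ?_⟩
  have : S.B i * S.B (S.d h) = (S.B i * S.B (S.d g₀)) * S.B (S.d h) := by rw [hfix]
  rw [this, mul_assoc, S.d_mul_ne g₀ h (Ne.symm hne), mul_zero]

/-- α₊ as a function -/
noncomputable def al (i : ι) : Gp := Classical.choose (exists_alpha S i)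

lemma al_mul (i : ι) : S.B (S.d (al S i)) * S.B i = S.B i :=
  (Classical.choose_spec (exists_alpha S i)).1

lemma al_mul_ne (i : ι) (h : Gp) (hne : h ≠ al S i) : S.B (S.d h) * S.B i = 0 :=
  (Classical.choose_spec (exists_alpha S i)).2 h hne

/-- β₊ as a function -/
noncomputable def be (i : ι) : Gp := Classical.choose (exists_beta S i)

lemma be_mul (i : ι) : S.B i * S.B (S.d (be S i)) = S.B i :=
  (Classical.choose_spec (exists_beta S i)).1

lemma be_mul_ne (i : ι) (h : Gp) (hne : h ≠ be S i) : S.B i * S.B (S.d h) = 0 :=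
  (Classical.choose_spec (exists_beta S i)).2 h hne

lemma d_mul_B (g : Gp) (i : ι) :
    S.B (S.d g) * S.B i = if al S i = g then S.B i else 0 := by
  by_cases h : al S i = g
  · rw [if_pos h, ← h, al_mul]
  · rw [if_neg h, al_mul_ne S i g (fun hh => h hh.symm)]

lemma B_mul_d (g : Gp) (i : ι) :
    S.B i * S.B (S.d g) = if be S i = g then S.B i else 0 := by
  by_cases h : be S i = g
  · rw [if_pos h, ← h, be_mul]
  · rw [if_neg h, be_mul_ne S i g (fun hh => h hh.symm)]

lemma alphaPlus_iff (i : ι) (g : Gp) : IsAlphaPlus S.toSetupPlus i g ↔ al S i = g := by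
  constructor
  · intro h
    by_contra hne
    have := al_mul_ne S i g (fun hh => hne hh.symm)
    rw [IsAlphaPlus] at h
    rw [h] at this
    exact B_ne S i this
  · intro h
    rw [IsAlphaPlus, ← h]
    exact al_mul S i

lemma betaPlus_iff (i : ι) (g : Gp) : IsBetaPlus S.toSetupPlus i g ↔ be S i = g := by
  constructor
  · intro h
    by_contra hne
    have := be_mul_ne S i g (fun hh => hne hh.symm)
    rw [IsBetaPlus] at h
    rw [h] at this
    exact B_ne S i this
  · intro h
    rw [IsBetaPlus, ← h]
    exact be_mul S i

lemma al_d (g : Gp) : al S (S.d g) = g :=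
  (alphaPlus_iff S (S.d g) g).1 (S.d_mul_self g)

lemma be_d (g : Gp) : be S (S.d g) = g :=
  (betaPlus_iff S (S.d g) g).1 (S.d_mul_self g)

lemma al_en (z : Gn) : al S (S.en z) = 1 := by
  refine (alphaPlus_iff S (S.en z) 1).1 ?_
  show S.B (S.d 1) * S.B (S.en z) = S.B (S.en z)
  rw [d1_eq_en1, ee_mul_ee, one_mul]

lemma be_en (z : Gn) : be S (S.en z) = 1 := by
  refine (betaPlus_iff S (S.en z) 1).1 ?_
  show S.B (S.en z) * S.B (S.d 1) = S.B (S.en z)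
  rw [d1_eq_en1, ee_mul_ee, mul_one]

/-- coefficients of `d_g * x` -/
lemma co_d_mul (g : Gp) (x : H) (l : ι) :
    co S l (S.B (S.d g) * x) = (if al S l = g then 1 else 0) * co S l x := by
  conv_lhs => rw [expand_H S x, Finset.mul_sum]
  rw [map_sum]
  have : ∀ m : ι, co S l (S.B (S.d g) * (co S m x • S.B m)) =
      co S m x * ((if al S m = g then 1 else 0) * (if m = l then 1 else 0)) := by
    intro m
    rw [mul_smul_comm, map_smul, smul_eq_mul, d_mul_B]
    by_cases h : al S m = g
    · rw [if_pos h, if_pos h, co_B, one_mul]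
    · rw [if_neg h, if_neg h, map_zero, zero_mul, mul_zero]
  rw [Finset.sum_congr rfl (fun m _ => this m), Finset.sum_eq_single l]
  · by_cases h : al S l = g <;> simp [h, mul_comm]
  · intro m _ hm
    simp [hm]
  · intro h; exact absurd (Finset.mem_univ l) h

lemma co_mul_d (g : Gp) (x : H) (l : ι) :
    co S l (x * S.B (S.d g)) = (if be S l = g then 1 else 0) * co S l x := by
  conv_lhs => rw [expand_H S x, Finset.sum_mul]
  rw [map_sum]
  have : ∀ m : ι, co S l ((co S m x • S.B m) * S.B (S.d g)) =
      co S m x * ((if be S m = g then 1 else 0) * (if m = l then 1 else 0)) := by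
    intro m
    rw [smul_mul_assoc, map_smul, smul_eq_mul, B_mul_d]
    by_cases h : be S m = g
    · rw [if_pos h, if_pos h, co_B, one_mul]
    · rw [if_neg h, if_neg h, map_zero, zero_mul, mul_zero]
  rw [Finset.sum_congr rfl (fun m _ => this m), Finset.sum_eq_single l]
  · by_cases h : be S l = g <;> simp [h, mul_comm]
  · intro m _ hm
    simp [hm]
  · intro h; exact absurd (Finset.mem_univ l) h

end LYZ

end Aux3

section Aux4

namespace LYZ

attribute [local instance] Classical.propDecidable

variable {H : Type} [Ring H] [HopfAlgebra ℂ H] {ι : Type} [Fintype ι]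
  {Gp : Type} [Group Gp] [Fintype Gp] {Gn : Type} [Group Gn] [Fintype Gn]
  (S : SetupFull H ι Gp Gn)

lemma eps_B (u : ι) : Coalgebra.counit (R := ℂ) (S.B u) =
    if ∃ z : Gn, S.en z = u then 1 else 0 := by
  by_cases h : ∃ z : Gn, S.en z = u
  · obtain ⟨z, hz⟩ := h
    rw [if_pos ⟨z, hz⟩, ← hz, eps_en]
  · rw [if_neg h]
    push_neg at h
    exact eps_of_not_en S u h

lemma sum_ran_en (f : ι → ℂ) :
    ∑ u : ι, (if ∃ z : Gn, S.en z = u then 1 else 0) * f u = ∑ z : Gn, f (S.en z) := by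
  have himg : ∀ u : ι, (∃ z : Gn, S.en z = u) ↔ u ∈ Finset.image S.en Finset.univ := by
    intro u
    simp [Finset.mem_image]
  calc ∑ u : ι, (if ∃ z : Gn, S.en z = u then 1 else 0) * f u
      = ∑ u : ι, (if u ∈ Finset.image S.en Finset.univ then f u else 0) := by
        refine Finset.sum_congr rfl fun u _ => ?_
        by_cases h : ∃ z : Gn, S.en z = u
        · rw [if_pos h, if_pos ((himg u).1 h), one_mul]
        · rw [if_neg h, if_neg (fun hm => h ((himg u).2 hm)), zero_mul]
    _ = ∑ u ∈ Finset.image S.en Finset.univ, f u := by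
        rw [Finset.sum_ite_mem, Finset.univ_inter]
    _ = ∑ z : Gn, f (S.en z) := by
        rw [Finset.sum_image (fun a _ b _ h => S.en_inj h)]

lemma sum_NN_left (i v : ι) :
    ∑ z : Gn, NN S i (S.en z, v) = if i = v then 1 else 0 := by
  set ψ : (H ⊗[ℂ] H) →ₗ[ℂ] ℂ :=
    (co S v) ∘ₗ (TensorProduct.lid ℂ H).toLinearMap ∘ₗ
      (Coalgebra.counit (R := ℂ)).rTensor H with hψ
  have hψtmul : ∀ (x y : H), ψ (x ⊗ₜ[ℂ] y) =
      Coalgebra.counit (R := ℂ) x * co S v y := by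
    intro x y
    rw [hψ]
    simp only [LinearMap.coe_comp, Function.comp_apply, LinearEquiv.coe_coe,
      LinearMap.rTensor_tmul, TensorProduct.lid_tmul, map_smul, smul_eq_mul]
  have h1 : ψ (Coalgebra.comul (R := ℂ) (S.B i)) = if i = v then 1 else 0 := by
    rw [hψ]
    simp only [LinearMap.coe_comp, Function.comp_apply, LinearEquiv.coe_coe,
      Coalgebra.rTensor_counit_comul, TensorProduct.lid_tmul, one_smul]
    exact co_B S i v
  have h2 : ψ (Coalgebra.comul (R := ℂ) (S.B i)) = ∑ z : Gn, NN S i (S.en z, v) := by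
    conv_lhs => rw [comul_B S i]
    rw [map_sum]
    have hterm : ∀ p : ι × ι, ψ (NN S i p • (S.B p.1 ⊗ₜ[ℂ] S.B p.2)) =
        (if ∃ z : Gn, S.en z = p.1 then 1 else 0) *
          (NN S i p * (if p.2 = v then 1 else 0)) := by
      intro p
      rw [map_smul, smul_eq_mul, hψtmul, eps_B, co_B]
      ring
    rw [Finset.sum_congr rfl (fun p _ => hterm p), Fintype.sum_prod_type]
    have hin : ∀ u : ι, ∑ w : ι, (if ∃ z : Gn, S.en z = u then 1 else 0) *
        (NN S i (u, w) * (if w = v then 1 else 0)) =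
        (if ∃ z : Gn, S.en z = u then 1 else 0) * NN S i (u, v) := by
      intro u
      rw [Finset.sum_eq_single v]
      · rw [if_pos rfl, mul_one]
      · intro w _ hw
        rw [if_neg hw, mul_zero, mul_zero]
      · intro h; exact absurd (Finset.mem_univ v) h
    rw [Finset.sum_congr rfl (fun u _ => hin u), sum_ran_en]
  rw [← h2, h1]

lemma sum_NN_right (i v : ι) :
    ∑ z : Gn, NN S i (v, S.en z) = if i = v then 1 else 0 := by
  set ψ : (H ⊗[ℂ] H) →ₗ[ℂ] ℂ :=
    (co S v) ∘ₗ (TensorProduct.rid ℂ H).toLinearMap ∘ₗ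
      (Coalgebra.counit (R := ℂ)).lTensor H with hψ
  have hψtmul : ∀ (x y : H), ψ (x ⊗ₜ[ℂ] y) =
      Coalgebra.counit (R := ℂ) y * co S v x := by
    intro x y
    rw [hψ]
    simp only [LinearMap.coe_comp, Function.comp_apply, LinearEquiv.coe_coe,
      LinearMap.lTensor_tmul, TensorProduct.rid_tmul, map_smul, smul_eq_mul]
  have h1 : ψ (Coalgebra.comul (R := ℂ) (S.B i)) = if i = v then 1 else 0 := by
    rw [hψ]
    simp only [LinearMap.coe_comp, Function.comp_apply, LinearEquiv.coe_coe,
      Coalgebra.lTensor_counit_comul, TensorProduct.rid_tmul, one_smul]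
    exact co_B S i v
  have h2 : ψ (Coalgebra.comul (R := ℂ) (S.B i)) = ∑ z : Gn, NN S i (v, S.en z) := by
    conv_lhs => rw [comul_B S i]
    rw [map_sum]
    have hterm : ∀ p : ι × ι, ψ (NN S i p • (S.B p.1 ⊗ₜ[ℂ] S.B p.2)) =
        (if ∃ z : Gn, S.en z = p.2 then 1 else 0) *
          (NN S i p * (if p.1 = v then 1 else 0)) := by
      intro p
      rw [map_smul, smul_eq_mul, hψtmul, eps_B, co_B]
      ring
    rw [Finset.sum_congr rfl (fun p _ => hterm p), Fintype.sum_prod_type_right]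
    have hin : ∀ w : ι, ∑ u : ι, (if ∃ z : Gn, S.en z = w then 1 else 0) *
        (NN S i (u, w) * (if u = v then 1 else 0)) =
        (if ∃ z : Gn, S.en z = w then 1 else 0) * NN S i (v, w) := by
      intro w
      rw [Finset.sum_eq_single v]
      · rw [if_pos rfl, mul_one]
      · intro u _ hu
        rw [if_neg hu, mul_zero, mul_zero]
      · intro h; exact absurd (Finset.mem_univ v) h
    rw [Finset.sum_congr rfl (fun w _ => hin w), sum_ran_en]
  rw [← h2, h1]

lemma NN_enL {i v : ι} (z : Gn) (h : NN S i (S.en z, v) ≠ 0) : v = i := by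
  by_contra hne
  have h0 : ∑ z : Gn, NN S i (S.en z, v) = 0 := by
    rw [sum_NN_left, if_neg (fun hh => hne hh.symm)]
  exact h ((Finset.sum_eq_zero_iff_of_nonneg
    (fun z _ => NN_nonneg S i (S.en z, v))).1 h0 z (Finset.mem_univ z))

lemma NN_enR {i v : ι} (z : Gn) (h : NN S i (v, S.en z) ≠ 0) : v = i := by
  by_contra hne
  have h0 : ∑ z : Gn, NN S i (v, S.en z) = 0 := by
    rw [sum_NN_right, if_neg (fun hh => hne hh.symm)]
  exact h ((Finset.sum_eq_zero_iff_of_nonneg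
    (fun z _ => NN_nonneg S i (v, S.en z))).1 h0 z (Finset.mem_univ z))

end LYZ

end Aux4

section Aux5

namespace LYZ

attribute [local instance] Classical.propDecidable

variable {H : Type} [Ring H] [HopfAlgebra ℂ H] {ι : Type} [Fintype ι]
  {Gp : Type} [Group Gp] [Fintype Gp] {Gn : Type} [Group Gn] [Fintype Gn]
  (S : SetupFull H ι Gp Gn)

/-- the bilinear coefficient functional on `H ⊗ H` as a lift -/
noncomputable def phi2 (q r : ι) : (H ⊗[ℂ] H) →ₗ[ℂ] ℂ :=
  TensorProduct.lift ((LinearMap.mul ℂ ℂ).compl₁₂ (co S q) (co S r))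

lemma phi2_tmul (q r : ι) (x y : H) :
    phi2 S q r (x ⊗ₜ[ℂ] y) = co S q x * co S r y := by
  simp [phi2]

lemma phi2_eq (q r : ι) : phi2 S q r = co2 S (q, r) := by
  apply TensorProduct.ext'
  intro x y
  rw [phi2_tmul, co2_tmul]

/-- the trilinear coefficient functional on `H ⊗ (H ⊗ H)` -/
noncomputable def co3 (p q r : ι) : (H ⊗[ℂ] (H ⊗[ℂ] H)) →ₗ[ℂ] ℂ :=
  TensorProduct.lift ((LinearMap.mul ℂ ℂ).compl₁₂ (co S p) (phi2 S q r))

lemma co3_tmul (p q r : ι) (x : H) (W : H ⊗[ℂ] H) :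
    co3 S p q r (x ⊗ₜ[ℂ] W) = co S p x * phi2 S q r W := by
  simp [co3]

lemma co3_tmul3 (p q r : ι) (x y z : H) :
    co3 S p q r (x ⊗ₜ[ℂ] (y ⊗ₜ[ℂ] z)) = co S p x * (co S q y * co S r z) := by
  rw [co3_tmul, phi2_tmul]

lemma coassoc_coeff (i p q r : ι) :
    ∑ t, NN S i (p, t) * NN S t (q, r) = ∑ t, NN S i (t, r) * NN S t (p, q) := by
  have h := Coalgebra.coassoc_apply (R := ℂ) (S.B i)
  have h2 := congrArg (co3 S p q r) h
  have hR : co3 S p q r ((Coalgebra.comul (R := ℂ)).lTensor H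
      (Coalgebra.comul (R := ℂ) (S.B i))) = ∑ t, NN S i (p, t) * NN S t (q, r) := by
    conv_lhs => rw [comul_B S i]
    rw [map_sum, map_sum]
    have hterm : ∀ p' : ι × ι,
        co3 S p q r ((Coalgebra.comul (R := ℂ)).lTensor H
          (NN S i p' • (S.B p'.1 ⊗ₜ[ℂ] S.B p'.2))) =
        NN S i p' * ((if p'.1 = p then 1 else 0) * NN S p'.2 (q, r)) := by
      intro p'
      rw [map_smul, map_smul, smul_eq_mul, LinearMap.lTensor_tmul, co3_tmul,
        phi2_eq, co_B]
      rfl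
    rw [Finset.sum_congr rfl (fun p' _ => hterm p'), Fintype.sum_prod_type]
    rw [Finset.sum_eq_single p]
    · refine Finset.sum_congr rfl fun t _ => ?_
      rw [if_pos rfl, one_mul]
    · intro u _ hu
      refine Finset.sum_eq_zero fun t _ => ?_
      rw [if_neg hu, zero_mul, mul_zero]
    · intro h; exact absurd (Finset.mem_univ p) h
  set A : ((H ⊗[ℂ] H) ⊗[ℂ] H) →ₗ[ℂ] ℂ :=
    co3 S p q r ∘ₗ (TensorProduct.assoc ℂ H H H).toLinearMap with hA
  have hAt : ∀ (x y z : H), A ((x ⊗ₜ[ℂ] y) ⊗ₜ[ℂ] z) = co S p x * (co S q y * co S r z) := by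
    intro x y z
    rw [hA, LinearMap.comp_apply, LinearEquiv.coe_toLinearMap, TensorProduct.assoc_tmul,
      co3_tmul3]
  have h2' : A ((Coalgebra.comul (R := ℂ)).rTensor H (Coalgebra.comul (R := ℂ) (S.B i))) =
      co3 S p q r ((Coalgebra.comul (R := ℂ)).lTensor H (Coalgebra.comul (R := ℂ) (S.B i))) := by
    rw [hA, LinearMap.comp_apply, LinearEquiv.coe_toLinearMap, h]
  have hL : A ((Coalgebra.comul (R := ℂ)).rTensor H (Coalgebra.comul (R := ℂ) (S.B i))) =
      ∑ t, NN S i (t, r) * NN S t (p, q) := by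
    conv_lhs => rw [comul_B S i]
    rw [map_sum, map_sum]
    have hterm : ∀ p' : ι × ι,
        A ((Coalgebra.comul (R := ℂ)).rTensor H
            (NN S i p' • (S.B p'.1 ⊗ₜ[ℂ] S.B p'.2))) =
        NN S i p' * (NN S p'.1 (p, q) * (if p'.2 = r then 1 else 0)) := by
      intro p'
      rw [map_smul, map_smul, smul_eq_mul, LinearMap.rTensor_tmul]
      congr 1
      conv_lhs => rw [comul_B S p'.1]
      rw [TensorProduct.sum_tmul, map_sum]
      have hin : ∀ q' : ι × ι,
          A ((NN S p'.1 q' • (S.B q'.1 ⊗ₜ[ℂ] S.B q'.2)) ⊗ₜ[ℂ] S.B p'.2) =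
          (if q' = (p, q) then NN S p'.1 q' else 0) *
            (if p'.2 = r then 1 else 0) := by
        intro q'
        obtain ⟨a, b⟩ := q'
        rw [← TensorProduct.smul_tmul', map_smul, smul_eq_mul, hAt, co_B, co_B, co_B]
        by_cases h1 : a = p <;> by_cases h2 : b = q <;>
          simp [h1, h2, Prod.ext_iff] <;> ring
      rw [Finset.sum_congr rfl (fun q' _ => hin q')]
      rw [← Finset.sum_mul, Finset.sum_ite_eq' Finset.univ (p, q)
        (fun q' => NN S p'.1 q'), if_pos (Finset.mem_univ _)]
    rw [Finset.sum_congr rfl (fun p' _ => hterm p'), Fintype.sum_prod_type]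
    refine Finset.sum_congr rfl fun t _ => ?_
    rw [Finset.sum_eq_single r]
    · rw [if_pos rfl, mul_one]
    · intro v _ hv
      rw [if_neg hv, mul_zero, mul_zero]
    · intro h; exact absurd (Finset.mem_univ r) h
  rw [hL, hR] at h2'
  exact h2'.symm

end LYZ

end Aux5

section Aux6

namespace LYZ

attribute [local instance] Classical.propDecidable

variable {H : Type} [Ring H] [HopfAlgebra ℂ H] {ι : Type} [Fintype ι]
  {Gp : Type} [Group Gp] [Fintype Gp] {Gn : Type} [Group Gn] [Fintype Gn]
  (S : SetupFull H ι Gp Gn)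

lemma x_pairwise (i : ι) (z z' : Gn) (hne : z ≠ z') :
    NN S i (i, S.en z) * NN S i (i, S.en z') = 0 := by
  have h := coassoc_coeff S i i (S.en z) (S.en z')
  have hL : ∑ t, NN S i (i, t) * NN S t (S.en z, S.en z') =
      NN S i (i, S.en z') * NN S (S.en z') (S.en z, S.en z') := by
    rw [Finset.sum_eq_single (S.en z')]
    · intro t _ ht
      have : NN S t (S.en z, S.en z') = 0 := by
        by_contra hnz
        exact ht (NN_enL S z hnz).symm
      rw [this, mul_zero]
    · intro hmem; exact absurd (Finset.mem_univ _) hmem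
  have hz : NN S (S.en z') (S.en z, S.en z') = 0 := by
    by_contra hnz
    have := NN_enR S z' hnz
    exact hne (S.en_inj this)
  have hR : ∑ t, NN S i (t, S.en z') * NN S t (i, S.en z) =
      NN S i (i, S.en z') * NN S i (i, S.en z) := by
    rw [Finset.sum_eq_single i]
    · intro t _ ht
      have : NN S i (t, S.en z') = 0 := by
        by_contra hnz
        exact ht (NN_enR S z' hnz)
      rw [this, zero_mul]
    · intro hmem; exact absurd (Finset.mem_univ _) hmem
  rw [hL, hz, mul_zero] at h
  rw [mul_comm]
  rw [hR] at h
  exact h.symm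

lemma x_exists (i : ι) : ∃ z : Gn, NN S i (i, S.en z) = 1 ∧
    ∀ z' : Gn, z' ≠ z → NN S i (i, S.en z') = 0 := by
  have hsum : ∑ z : Gn, NN S i (i, S.en z) = 1 := by
    rw [sum_NN_right, if_pos rfl]
  obtain ⟨z₀, hz₀⟩ : ∃ z : Gn, NN S i (i, S.en z) ≠ 0 := by
    by_contra hall
    push_neg at hall
    rw [Finset.sum_congr rfl (fun z _ => hall z)] at hsum
    simp at hsum
  have hzero : ∀ z' : Gn, z' ≠ z₀ → NN S i (i, S.en z') = 0 := by
    intro z' hne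
    have := x_pairwise S i z₀ z' (Ne.symm hne)
    rcases mul_eq_zero.1 this with h | h
    · exact absurd h hz₀
    · exact h
  refine ⟨z₀, ?_, hzero⟩
  rw [Finset.sum_eq_single z₀] at hsum
  · exact hsum
  · intro z' _ hne; exact hzero z' hne
  · intro hmem; exact absurd (Finset.mem_univ _) hmem

lemma w_pairwise (i : ι) (z z' : Gn) (hne : z ≠ z') :
    NN S i (S.en z, i) * NN S i (S.en z', i) = 0 := by
  have h := coassoc_coeff S i (S.en z) (S.en z') i
  have hL : ∑ t, NN S i (S.en z, t) * NN S t (S.en z', i) =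
      NN S i (S.en z, i) * NN S i (S.en z', i) := by
    rw [Finset.sum_eq_single i]
    · intro t _ ht
      have : NN S i (S.en z, t) = 0 := by
        by_contra hnz
        exact ht (NN_enL S z hnz)
      rw [this, zero_mul]
    · intro hmem; exact absurd (Finset.mem_univ _) hmem
  have hz : NN S (S.en z') (S.en z, S.en z') = 0 := by
    by_contra hnz
    exact hne (S.en_inj (NN_enR S z' hnz))
  have hR : ∑ t, NN S i (t, i) * NN S t (S.en z, S.en z') = 0 := by
    refine Finset.sum_eq_zero fun t _ => ?_
    by_cases ht : t = S.en z'
    · rw [ht, hz, mul_zero]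
    · have : NN S t (S.en z, S.en z') = 0 := by
        by_contra hnz
        exact ht (NN_enL S z hnz).symm
      rw [this, mul_zero]
  rw [hL, hR] at h
  exact h

lemma w_exists (i : ι) : ∃ z : Gn, NN S i (S.en z, i) = 1 ∧
    ∀ z' : Gn, z' ≠ z → NN S i (S.en z', i) = 0 := by
  have hsum : ∑ z : Gn, NN S i (S.en z, i) = 1 := by
    rw [sum_NN_left, if_pos rfl]
  obtain ⟨z₀, hz₀⟩ : ∃ z : Gn, NN S i (S.en z, i) ≠ 0 := by
    by_contra hall
    push_neg at hall
    rw [Finset.sum_congr rfl (fun z _ => hall z)] at hsum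
    simp at hsum
  have hzero : ∀ z' : Gn, z' ≠ z₀ → NN S i (S.en z', i) = 0 := by
    intro z' hne
    have := w_pairwise S i z₀ z' (Ne.symm hne)
    rcases mul_eq_zero.1 this with h | h
    · exact absurd h hz₀
    · exact h
  refine ⟨z₀, ?_, hzero⟩
  rw [Finset.sum_eq_single z₀] at hsum
  · exact hsum
  · intro z' _ hne; exact hzero z' hne
  · intro hmem; exact absurd (Finset.mem_univ _) hmem

/-- β₋ as a function -/
noncomputable def xx (i : ι) : Gn := Classical.choose (x_exists S i)

lemma xx_one (i : ι) : NN S i (i, S.en (xx S i)) = 1 :=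
  (Classical.choose_spec (x_exists S i)).1

lemma xx_zero (i : ι) (z : Gn) (h : z ≠ xx S i) : NN S i (i, S.en z) = 0 :=
  (Classical.choose_spec (x_exists S i)).2 z h

/-- α₋ as a function -/
noncomputable def ww (i : ι) : Gn := Classical.choose (w_exists S i)

lemma ww_one (i : ι) : NN S i (S.en (ww S i), i) = 1 :=
  (Classical.choose_spec (w_exists S i)).1

lemma ww_zero (i : ι) (z : Gn) (h : z ≠ ww S i) : NN S i (S.en z, i) = 0 :=
  (Classical.choose_spec (w_exists S i)).2 z h

lemma NN_right_char {i v : ι} {z : Gn} (h : NN S i (v, S.en z) ≠ 0) :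
    v = i ∧ z = xx S i := by
  have hv := NN_enR S z h
  subst hv
  refine ⟨rfl, ?_⟩
  by_contra hne
  exact h (xx_zero S v z hne)

lemma NN_left_char {i v : ι} {z : Gn} (h : NN S i (S.en z, v) ≠ 0) :
    v = i ∧ z = ww S i := by
  have hv := NN_enL S z h
  subst hv
  refine ⟨rfl, ?_⟩
  by_contra hne
  exact h (ww_zero S v z hne)

lemma xx_en (z : Gn) : xx S (S.en z) = z := by
  have hsum : ∑ z' : Gn, NN S (S.en z) (S.en z, S.en z') = 1 := by
    rw [sum_NN_right, if_pos rfl]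
  have : NN S (S.en z) (S.en z, S.en z) = 1 := by
    rw [Finset.sum_eq_single z] at hsum
    · exact hsum
    · intro z' _ hne
      by_contra hnz
      exact hne (S.en_inj (NN_enL S z hnz))
    · intro hmem; exact absurd (Finset.mem_univ _) hmem
  have h := NN_right_char S (i := S.en z) (v := S.en z) (z := z)
    (by rw [this]; exact one_ne_zero)
  exact h.2.symm

lemma ww_en (z : Gn) : ww S (S.en z) = z := by
  have hsum : ∑ z' : Gn, NN S (S.en z) (S.en z', S.en z) = 1 := by
    rw [sum_NN_left, if_pos rfl]
  have : NN S (S.en z) (S.en z, S.en z) = 1 := by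
    rw [Finset.sum_eq_single z] at hsum
    · exact hsum
    · intro z' _ hne
      by_contra hnz
      exact hne (S.en_inj (NN_enR S z hnz))
    · intro hmem; exact absurd (Finset.mem_univ _) hmem
  have h := NN_left_char S (i := S.en z) (v := S.en z) (z := z)
    (by rw [this]; exact one_ne_zero)
  exact h.2.symm

lemma NN_d_expand (g : Gp) (p : ι × ι) :
    NN S (S.d g) p = ∑ h : Gp, (if S.d h = p.1 ∧ S.d (h⁻¹ * g) = p.2 then 1 else 0) := by
  rw [NN_eq, S.d_comul, map_sum]
  exact Finset.sum_congr rfl fun h _ => co2_tmul_B S _ _ p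

lemma NN_d_pair (g h : Gp) : NN S (S.d g) (S.d h, S.d (h⁻¹ * g)) = 1 := by
  rw [NN_d_expand, Finset.sum_eq_single h]
  · rw [if_pos ⟨rfl, rfl⟩]
  · intro h' _ hne
    rw [if_neg]
    rintro ⟨h1, -⟩
    exact hne (S.d_inj h1)
  · intro hmem; exact absurd (Finset.mem_univ _) hmem

lemma NN_d_supp (g : Gp) (p : ι × ι) (hp : NN S (S.d g) p ≠ 0) :
    ∃ h : Gp, p = (S.d h, S.d (h⁻¹ * g)) := by
  by_contra hall
  push_neg at hall
  apply hp
  rw [NN_d_expand]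
  refine Finset.sum_eq_zero fun h _ => ?_
  rw [if_neg]
  rintro ⟨h1, h2⟩
  exact hall h (Prod.ext h1.symm h2.symm)

lemma xx_d (g : Gp) : xx S (S.d g) = 1 := by
  have h1 : NN S (S.d g) (S.d g, S.en 1) = 1 := by
    rw [S.en_one]
    have := NN_d_pair S g g
    rwa [inv_mul_cancel] at this
  have := NN_right_char S (i := S.d g) (v := S.d g) (z := 1)
    (by rw [h1]; exact one_ne_zero)
  exact this.2.symm

lemma ww_d (g : Gp) : ww S (S.d g) = 1 := by
  have h1 : NN S (S.d g) (S.en 1, S.d g) = 1 := by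
    rw [S.en_one]
    have := NN_d_pair S g 1
    rwa [inv_one, one_mul] at this
  have := NN_left_char S (i := S.d g) (v := S.d g) (z := 1)
    (by rw [h1]; exact one_ne_zero)
  exact this.2.symm

end LYZ

end Aux6

section Aux7

namespace LYZ

attribute [local instance] Classical.propDecidable

variable {H : Type} [Ring H] [HopfAlgebra ℂ H] {ι : Type} [Fintype ι]
  {Gp : Type} [Group Gp] [Fintype Gp] {Gn : Type} [Group Gn] [Fintype Gn]
  (S : SetupFull H ι Gp Gn)

lemma co2_dd_mul (h k : Gp) (i u v : ι) :
    co2 S (u, v) ((S.B (S.d h) ⊗ₜ[ℂ] S.B (S.d k)) * Coalgebra.comul (R := ℂ) (S.B i)) =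
    (if al S u = h then 1 else 0) * ((if al S v = k then 1 else 0) * NN S i (u, v)) := by
  conv_lhs => rw [comul_B S i, Finset.mul_sum]
  rw [map_sum]
  have hterm : ∀ p : ι × ι,
      co2 S (u, v) ((S.B (S.d h) ⊗ₜ[ℂ] S.B (S.d k)) * (NN S i p • (S.B p.1 ⊗ₜ[ℂ] S.B p.2))) =
      (if p = (u, v) then
        (if al S u = h then 1 else 0) * ((if al S v = k then 1 else 0) * NN S i p)
      else 0) := by
    intro p
    rw [mul_smul_comm, map_smul, smul_eq_mul, Algebra.TensorProduct.tmul_mul_tmul,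
      co2_tmul, co_d_mul, co_d_mul, co_B, co_B]
    obtain ⟨a, b⟩ := p
    by_cases h1 : a = u <;> by_cases h2 : b = v <;>
      simp only [h1, h2, if_pos, Prod.mk.injEq] <;> simp [h1, h2] <;> ring
  rw [Finset.sum_congr rfl (fun p _ => hterm p), Finset.sum_ite_eq' Finset.univ (u, v),
    if_pos (Finset.mem_univ _)]

lemma co2_mul_dd (h k : Gp) (i u v : ι) :
    co2 S (u, v) (Coalgebra.comul (R := ℂ) (S.B i) * (S.B (S.d h) ⊗ₜ[ℂ] S.B (S.d k))) =
    (if be S u = h then 1 else 0) * ((if be S v = k then 1 else 0) * NN S i (u, v)) := by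
  conv_lhs => rw [comul_B S i, Finset.sum_mul]
  rw [map_sum]
  have hterm : ∀ p : ι × ι,
      co2 S (u, v) ((NN S i p • (S.B p.1 ⊗ₜ[ℂ] S.B p.2)) * (S.B (S.d h) ⊗ₜ[ℂ] S.B (S.d k))) =
      (if p = (u, v) then
        (if be S u = h then 1 else 0) * ((if be S v = k then 1 else 0) * NN S i p)
      else 0) := by
    intro p
    rw [smul_mul_assoc, map_smul, smul_eq_mul, Algebra.TensorProduct.tmul_mul_tmul,
      co2_tmul, co_mul_d, co_mul_d, co_B, co_B]
    obtain ⟨a, b⟩ := p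
    by_cases h1 : a = u <;> by_cases h2 : b = v <;>
      simp only [h1, h2, if_pos, Prod.mk.injEq] <;> simp [h1, h2] <;> ring
  rw [Finset.sum_congr rfl (fun p _ => hterm p), Finset.sum_ite_eq' Finset.univ (u, v),
    if_pos (Finset.mem_univ _)]

lemma al_balance {i u v : ι} (hnz : NN S i (u, v) ≠ 0) : al S u * al S v = al S i := by
  have hM : Coalgebra.comul (R := ℂ) (S.B i) =
      (∑ h : Gp, S.B (S.d h) ⊗ₜ[ℂ] S.B (S.d (h⁻¹ * al S i))) * Coalgebra.comul (R := ℂ) (S.B i) := by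
    conv_lhs => rw [← al_mul S i]
    rw [Bialgebra.comul_mul, S.d_comul]
  have h2 := congrArg (co2 S (u, v)) hM
  rw [Finset.sum_mul, map_sum,
    Finset.sum_congr rfl (fun h _ => co2_dd_mul S h (h⁻¹ * al S i) i u v),
    Finset.sum_eq_single (al S u)] at h2
  · rw [if_pos rfl, one_mul] at h2
    by_cases hc : al S v = (al S u)⁻¹ * al S i
    · rw [hc, ← mul_assoc, mul_inv_cancel, one_mul]
    · rw [if_neg hc, zero_mul] at h2
      exact absurd h2 hnz
  · intro h _ hne
    rw [if_neg (fun hh => hne hh.symm), zero_mul]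
  · intro hmem; exact absurd (Finset.mem_univ _) hmem

lemma be_balance {i u v : ι} (hnz : NN S i (u, v) ≠ 0) : be S u * be S v = be S i := by
  have hM : Coalgebra.comul (R := ℂ) (S.B i) =
      Coalgebra.comul (R := ℂ) (S.B i) * (∑ h : Gp, S.B (S.d h) ⊗ₜ[ℂ] S.B (S.d (h⁻¹ * be S i))) := by
    conv_lhs => rw [← be_mul S i]
    rw [Bialgebra.comul_mul, S.d_comul]
  have h2 := congrArg (co2 S (u, v)) hM
  rw [Finset.mul_sum, map_sum,
    Finset.sum_congr rfl (fun h _ => co2_mul_dd S h (h⁻¹ * be S i) i u v),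
    Finset.sum_eq_single (be S u)] at h2
  · rw [if_pos rfl, one_mul] at h2
    by_cases hc : be S v = (be S u)⁻¹ * be S i
    · rw [hc, ← mul_assoc, mul_inv_cancel, one_mul]
    · rw [if_neg hc, zero_mul] at h2
      exact absurd h2 hnz
  · intro h _ hne
    rw [if_neg (fun hh => hne hh.symm), zero_mul]
  · intro hmem; exact absurd (Finset.mem_univ _) hmem

lemma x_balance {i u v : ι} (hnz : NN S i (u, v) ≠ 0) : xx S v = xx S i := by
  by_contra hne
  have h := coassoc_coeff S i u v (S.en (xx S v))
  have hL : ∑ t, NN S i (u, t) * NN S t (v, S.en (xx S v)) = NN S i (u, v) := by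
    rw [Finset.sum_eq_single v]
    · rw [xx_one, mul_one]
    · intro t _ ht
      have : NN S t (v, S.en (xx S v)) = 0 := by
        by_contra hz
        exact ht (NN_right_char S hz).1.symm
      rw [this, mul_zero]
    · intro hmem; exact absurd (Finset.mem_univ _) hmem
  have hR : ∑ t, NN S i (t, S.en (xx S v)) * NN S t (u, v) = 0 := by
    refine Finset.sum_eq_zero fun t _ => ?_
    have : NN S i (t, S.en (xx S v)) = 0 := by
      by_contra hz
      obtain ⟨h1, h2⟩ := NN_right_char S hz
      exact hne h2
    rw [this, zero_mul]
  rw [hL, hR] at h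
  exact hnz h

lemma w_balance {i u v : ι} (hnz : NN S i (u, v) ≠ 0) : ww S u = ww S i := by
  by_contra hne
  have h := coassoc_coeff S i (S.en (ww S u)) u v
  have hL : ∑ t, NN S i (S.en (ww S u), t) * NN S t (u, v) = 0 := by
    refine Finset.sum_eq_zero fun t _ => ?_
    have : NN S i (S.en (ww S u), t) = 0 := by
      by_contra hz
      obtain ⟨h1, h2⟩ := NN_left_char S hz
      exact hne h2
    rw [this, zero_mul]
  have hR : ∑ t, NN S i (t, v) * NN S t (S.en (ww S u), u) = NN S i (u, v) := by
    rw [Finset.sum_eq_single u]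
    · rw [ww_one, mul_one]
    · intro t _ ht
      have : NN S t (S.en (ww S u), u) = 0 := by
        by_contra hz
        exact ht (NN_left_char S hz).1.symm
      rw [this, mul_zero]
    · intro hmem; exact absurd (Finset.mem_univ _) hmem
  rw [hL, hR] at h
  exact hnz h.symm

lemma xw_mid {i u v : ι} (hnz : NN S i (u, v) ≠ 0) : xx S u = ww S v := by
  by_contra hne
  have h := coassoc_coeff S i u (S.en (xx S u)) v
  have hL : ∑ t, NN S i (u, t) * NN S t (S.en (xx S u), v) = 0 := by
    refine Finset.sum_eq_zero fun t _ => ?_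
    by_cases ht : t = v
    · have : NN S v (S.en (xx S u), v) = 0 := by
        by_contra hz
        exact hne (NN_left_char S hz).2
      rw [ht, this, mul_zero]
    · have : NN S t (S.en (xx S u), v) = 0 := by
        by_contra hz
        exact ht ((NN_left_char S hz).1.symm)
      rw [this, mul_zero]
  have hR : ∑ t, NN S i (t, v) * NN S t (u, S.en (xx S u)) = NN S i (u, v) := by
    rw [Finset.sum_eq_single u]
    · rw [xx_one, mul_one]
    · intro t _ ht
      have : NN S t (u, S.en (xx S u)) = 0 := by
        by_contra hz
        exact ht (NN_right_char S hz).1.symm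
      rw [this, mul_zero]
    · intro hmem; exact absurd (Finset.mem_univ _) hmem
  rw [hL, hR] at h
  exact hnz h.symm

end LYZ

end Aux7

section Aux8

namespace LYZ

attribute [local instance] Classical.propDecidable

variable {H : Type} [Ring H] [HopfAlgebra ℂ H] {ι : Type} [Fintype ι]
  {Gp : Type} [Group Gp] [Fintype Gp] {Gn : Type} [Group Gn] [Fintype Gn]
  (S : SetupFull H ι Gp Gn)

lemma mul_vanish {i j : ι} (h : be S i ≠ al S j) : S.B i * S.B j = 0 := by
  have : S.B i * S.B j = (S.B i * S.B (S.d (be S i))) * (S.B (S.d (al S j)) * S.B j) := by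
    rw [be_mul, al_mul]
  rw [this, mul_assoc, ← mul_assoc (S.B (S.d (be S i))), S.d_mul_ne _ _ h,
    zero_mul, mul_zero]

lemma co_mul_al {i j l : ι} (hnz : co S l (S.B i * S.B j) ≠ 0) : al S l = al S i := by
  have h1 : S.B i * S.B j = S.B (S.d (al S i)) * (S.B i * S.B j) := by
    rw [← mul_assoc, al_mul]
  have h2 := congrArg (co S l) h1
  rw [co_d_mul] at h2
  by_cases hc : al S l = al S i
  · exact hc
  · rw [if_neg hc, zero_mul] at h2
    exact absurd h2 hnz

lemma co_mul_be {i j l : ι} (hnz : co S l (S.B i * S.B j) ≠ 0) : be S l = be S j := by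
  have h1 : S.B i * S.B j = (S.B i * S.B j) * S.B (S.d (be S j)) := by
    rw [mul_assoc, be_mul]
  have h2 := congrArg (co S l) h1
  rw [co_mul_d] at h2
  by_cases hc : be S l = be S j
  · exact hc
  · rw [if_neg hc, zero_mul] at h2
    exact absurd h2 hnz

lemma co2_mul_expand (Z Z' : H ⊗[ℂ] H) (r : ι × ι) :
    co2 S r (Z * Z') = ∑ p : ι × ι, ∑ q : ι × ι, co2 S p Z * co2 S q Z' *
      (co S r.1 (S.B p.1 * S.B q.1) * co S r.2 (S.B p.2 * S.B q.2)) := by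
  conv_lhs => rw [expand_HH S Z, expand_HH S Z', Finset.sum_mul_sum]
  rw [map_sum]
  refine Finset.sum_congr rfl fun p _ => ?_
  rw [map_sum]
  refine Finset.sum_congr rfl fun q _ => ?_
  rw [smul_mul_smul_comm, map_smul, smul_eq_mul, Algebra.TensorProduct.tmul_mul_tmul,
    co2_tmul]

lemma comul_prod_coeff_nonneg (i j : ι) (p q : ι × ι) (r : ι × ι) :
    0 ≤ NN S i p * NN S j q *
      (co S r.1 (S.B p.1 * S.B q.1) * co S r.2 (S.B p.2 * S.B q.2)) := by
  refine mul_nonneg (mul_nonneg (NN_nonneg S i p) (NN_nonneg S j q)) ?_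
  exact mul_nonneg (S.pos.mul_nonneg p.1 q.1 r.1) (S.pos.mul_nonneg p.2 q.2 r.2)

lemma comul_prod_ge (i j : ι) (r : ι × ι) (p₀ q₀ : ι × ι) :
    NN S i p₀ * NN S j q₀ *
      (co S r.1 (S.B p₀.1 * S.B q₀.1) * co S r.2 (S.B p₀.2 * S.B q₀.2)) ≤
    co2 S r (Coalgebra.comul (R := ℂ) (S.B i * S.B j)) := by
  rw [Bialgebra.comul_mul, co2_mul_expand]
  have hq : ∀ p : ι × ι, (0 : ℂ) ≤ ∑ q : ι × ι, NN S i p * NN S j q *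
      (co S r.1 (S.B p.1 * S.B q.1) * co S r.2 (S.B p.2 * S.B q.2)) :=
    fun p => Finset.sum_nonneg fun q _ => comul_prod_coeff_nonneg S i j p q r
  calc NN S i p₀ * NN S j q₀ *
      (co S r.1 (S.B p₀.1 * S.B q₀.1) * co S r.2 (S.B p₀.2 * S.B q₀.2))
      ≤ ∑ q : ι × ι, NN S i p₀ * NN S j q *
        (co S r.1 (S.B p₀.1 * S.B q.1) * co S r.2 (S.B p₀.2 * S.B q.2)) :=
        Finset.single_le_sum (fun q _ => comul_prod_coeff_nonneg S i j p₀ q r)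
          (Finset.mem_univ q₀)
    _ ≤ ∑ p : ι × ι, ∑ q : ι × ι, NN S i p * NN S j q *
        (co S r.1 (S.B p.1 * S.B q.1) * co S r.2 (S.B p.2 * S.B q.2)) :=
        Finset.single_le_sum (fun p _ => hq p) (Finset.mem_univ p₀)

lemma comul_coeff_en_right (x : H) (l : ι) (z : Gn) (h : z ≠ xx S l) :
    co2 S (l, S.en z) (Coalgebra.comul (R := ℂ) x) = co S l x * NN S l (l, S.en z) := by
  conv_lhs => rw [expand_H S x]
  rw [map_sum, map_sum, Finset.sum_eq_single l]
  · rw [map_smul, map_smul, smul_eq_mul]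
    rfl
  · intro m _ hm
    rw [map_smul, map_smul, smul_eq_mul,
      show co2 S (l, S.en z) (Coalgebra.comul (R := ℂ) (S.B m)) = NN S m (l, S.en z) from rfl]
    have : NN S m (l, S.en z) = 0 := by
      by_contra hzz
      exact hm ((NN_right_char S hzz).1.symm)
    rw [this, mul_zero]
  · intro hmem; exact absurd (Finset.mem_univ _) hmem

lemma co_mul_xx {i j l : ι} (hnz : co S l (S.B i * S.B j) ≠ 0) :
    xx S l = xx S i * xx S j := by
  by_contra hne
  set z₀ : Gn := xx S i * xx S j with hz₀
  have hA : co2 S (l, S.en z₀) (Coalgebra.comul (R := ℂ) (S.B i * S.B j)) = 0 := by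
    rw [comul_coeff_en_right S _ l z₀ (fun hh => hne hh.symm),
      xx_zero S l z₀ (fun hh => hne hh.symm), mul_zero]
  have hB := comul_prod_ge S i j (l, S.en z₀) (i, S.en (xx S i)) (j, S.en (xx S j))
  rw [hA] at hB
  have hval : NN S i (i, S.en (xx S i)) * NN S j (j, S.en (xx S j)) *
      (co S l (S.B i * S.B j) *
        co S (S.en z₀) (S.B (S.en (xx S i)) * S.B (S.en (xx S j)))) =
      co S l (S.B i * S.B j) := by
    rw [xx_one, xx_one, ee_mul_ee, co_B, if_pos rfl]
    ring
  rw [hval] at hB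
  have h0 : (0 : ℂ) ≤ co S l (S.B i * S.B j) := by
    conv_rhs => rw [show S.B i * S.B j = S.B i * S.B j from rfl]
    exact S.pos.mul_nonneg i j l
  exact hnz (le_antisymm hB h0)

lemma comul_coeff_en_left (x : H) (l : ι) (z : Gn) (h : z ≠ ww S l) :
    co2 S (S.en z, l) (Coalgebra.comul (R := ℂ) x) = co S l x * NN S l (S.en z, l) := by
  conv_lhs => rw [expand_H S x]
  rw [map_sum, map_sum, Finset.sum_eq_single l]
  · rw [map_smul, map_smul, smul_eq_mul]
    rfl
  · intro m _ hm
    rw [map_smul, map_smul, smul_eq_mul,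
      show co2 S (S.en z, l) (Coalgebra.comul (R := ℂ) (S.B m)) = NN S m (S.en z, l) from rfl]
    have : NN S m (S.en z, l) = 0 := by
      by_contra hzz
      exact hm ((NN_left_char S hzz).1.symm)
    rw [this, mul_zero]
  · intro hmem; exact absurd (Finset.mem_univ _) hmem

lemma co_mul_ww {i j l : ι} (hnz : co S l (S.B i * S.B j) ≠ 0) :
    ww S l = ww S i * ww S j := by
  by_contra hne
  set z₀ : Gn := ww S i * ww S j with hz₀
  have hA : co2 S (S.en z₀, l) (Coalgebra.comul (R := ℂ) (S.B i * S.B j)) = 0 := by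
    rw [comul_coeff_en_left S _ l z₀ (fun hh => hne hh.symm),
      ww_zero S l z₀ (fun hh => hne hh.symm), mul_zero]
  have hB := comul_prod_ge S i j (S.en z₀, l) (S.en (ww S i), i) (S.en (ww S j), j)
  rw [hA] at hB
  have hval : NN S i (S.en (ww S i), i) * NN S j (S.en (ww S j), j) *
      (co S (S.en z₀) (S.B (S.en (ww S i)) * S.B (S.en (ww S j))) *
        co S l (S.B i * S.B j)) =
      co S l (S.B i * S.B j) := by
    rw [ww_one, ww_one, ee_mul_ee, co_B, if_pos rfl]
    ring
  rw [hval] at hB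
  have h0 : (0 : ℂ) ≤ co S l (S.B i * S.B j) := S.pos.mul_nonneg i j l
  exact hnz (le_antisymm hB h0)

end LYZ

end Aux8

section Aux9

namespace LYZ

attribute [local instance] Classical.propDecidable

variable {H : Type} [Ring H] [HopfAlgebra ℂ H] {ι : Type} [Fintype ι]
  {Gp : Type} [Group Gp] [Fintype Gp] {Gn : Type} [Group Gn] [Fintype Gn]
  (S : SetupFull H ι Gp Gn)

lemma co_S_mul_nonneg (u v l : ι) :
    0 ≤ co S l (HopfAlgebra.antipode (R := ℂ) (S.B u) * S.B v) := by
  have hrw : HopfAlgebra.antipode (R := ℂ) (S.B u) * S.B v =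
      ∑ k, co S k (HopfAlgebra.antipode (R := ℂ) (S.B u)) • (S.B k * S.B v) := by
    conv_lhs => rw [expand_H S (HopfAlgebra.antipode (R := ℂ) (S.B u))]
    rw [Finset.sum_mul]
    exact Finset.sum_congr rfl fun k _ => smul_mul_assoc _ _ _
  rw [hrw, map_sum]
  refine Finset.sum_nonneg fun k _ => ?_
  rw [map_smul, smul_eq_mul]
  exact mul_nonneg (S.pos.antipode_nonneg u k) (S.pos.mul_nonneg k v l)

lemma co_mul_S_nonneg (u v l : ι) :
    0 ≤ co S l (S.B u * HopfAlgebra.antipode (R := ℂ) (S.B v)) := by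
  have hrw : S.B u * HopfAlgebra.antipode (R := ℂ) (S.B v) =
      ∑ k, co S k (HopfAlgebra.antipode (R := ℂ) (S.B v)) • (S.B u * S.B k) := by
    conv_lhs => rw [expand_H S (HopfAlgebra.antipode (R := ℂ) (S.B v))]
    rw [Finset.mul_sum]
    exact Finset.sum_congr rfl fun k _ => mul_smul_comm _ _ _
  rw [hrw, map_sum]
  refine Finset.sum_nonneg fun k _ => ?_
  rw [map_smul, smul_eq_mul]
  exact mul_nonneg (S.pos.antipode_nonneg v k) (S.pos.mul_nonneg u k l)

lemma antipode_sum_r (i : ι) :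
    ∑ p : ι × ι, NN S i p • (HopfAlgebra.antipode (R := ℂ) (S.B p.1) * S.B p.2) =
    algebraMap ℂ H (Coalgebra.counit (R := ℂ) (S.B i)) := by
  have h := HopfAlgebra.mul_antipode_rTensor_comul_apply (R := ℂ) (S.B i)
  rw [← h]
  conv_rhs => rw [comul_B S i]
  rw [map_sum, map_sum]
  refine Finset.sum_congr rfl fun p _ => ?_
  rw [map_smul, map_smul, LinearMap.rTensor_tmul, LinearMap.mul'_apply]

lemma antipode_sum_l (i : ι) :
    ∑ p : ι × ι, NN S i p • (S.B p.1 * HopfAlgebra.antipode (R := ℂ) (S.B p.2)) =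
    algebraMap ℂ H (Coalgebra.counit (R := ℂ) (S.B i)) := by
  have h := HopfAlgebra.mul_antipode_lTensor_comul_apply (R := ℂ) (S.B i)
  rw [← h]
  conv_rhs => rw [comul_B S i]
  rw [map_sum, map_sum]
  refine Finset.sum_congr rfl fun p _ => ?_
  rw [map_smul, map_smul, LinearMap.lTensor_tmul, LinearMap.mul'_apply]

lemma antipode_term_zero_r {i : ι} (heps : Coalgebra.counit (R := ℂ) (S.B i) = 0)
    {p : ι × ι} (hnz : NN S i p ≠ 0) :
    HopfAlgebra.antipode (R := ℂ) (S.B p.1) * S.B p.2 = 0 := by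
  have hsum := antipode_sum_r S i
  rw [heps, map_zero] at hsum
  refine S.B.ext_elem fun l => ?_
  rw [map_zero, Finsupp.coe_zero, Pi.zero_apply]
  have hl : ∑ q : ι × ι, NN S i q *
      co S l (HopfAlgebra.antipode (R := ℂ) (S.B q.1) * S.B q.2) = 0 := by
    have := congrArg (co S l) hsum
    rw [map_sum, map_zero] at this
    rw [← this]
    exact Finset.sum_congr rfl fun q _ => by rw [map_smul, smul_eq_mul]
  have hterm := (Finset.sum_eq_zero_iff_of_nonneg (fun q _ =>
    mul_nonneg (NN_nonneg S i q) (co_S_mul_nonneg S q.1 q.2 l))).1 hl p (Finset.mem_univ p)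
  rcases mul_eq_zero.1 hterm with h | h
  · exact absurd h hnz
  · exact h

lemma antipode_term_zero_l {i : ι} (heps : Coalgebra.counit (R := ℂ) (S.B i) = 0)
    {p : ι × ι} (hnz : NN S i p ≠ 0) :
    S.B p.1 * HopfAlgebra.antipode (R := ℂ) (S.B p.2) = 0 := by
  have hsum := antipode_sum_l S i
  rw [heps, map_zero] at hsum
  refine S.B.ext_elem fun l => ?_
  rw [map_zero, Finsupp.coe_zero, Pi.zero_apply]
  have hl : ∑ q : ι × ι, NN S i q *
      co S l (S.B q.1 * HopfAlgebra.antipode (R := ℂ) (S.B q.2)) = 0 := by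
    have := congrArg (co S l) hsum
    rw [map_sum, map_zero] at this
    rw [← this]
    exact Finset.sum_congr rfl fun q _ => by rw [map_smul, smul_eq_mul]
  have hterm := (Finset.sum_eq_zero_iff_of_nonneg (fun q _ =>
    mul_nonneg (NN_nonneg S i q) (co_mul_S_nonneg S q.1 q.2 l))).1 hl p (Finset.mem_univ p)
  rcases mul_eq_zero.1 hterm with h | h
  · exact absurd h hnz
  · exact h

lemma antipode_d1 : HopfAlgebra.antipode (R := ℂ) (S.B (S.d 1)) = S.B (S.d 1) := by
  rw [S.d_antipode, inv_one]

lemma corner_aw {i : ι} (ha : al S i = 1) (hw : ww S i = 1) : i = S.d 1 := by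
  by_cases heps : Coalgebra.counit (R := ℂ) (S.B i) = 0
  · exfalso
    have h1 : NN S i (S.en 1, i) = 1 := by
      have := ww_one S i
      rwa [hw] at this
    have h2 := antipode_term_zero_r S heps (p := (S.en 1, i))
      (by rw [h1]; exact one_ne_zero)
    rw [show S.en (1 : Gn) = S.d (1 : Gp) from S.en_one, antipode_d1] at h2
    have h3 : S.B (S.d 1) * S.B i = S.B i := by
      have := al_mul S i
      rwa [ha] at this
    rw [h3] at h2
    exact B_ne S i h2
  · obtain ⟨z, hz⟩ := (S.en_range i).1 heps
    have : ww S (S.en z) = 1 := by rw [hz, hw]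
    rw [ww_en] at this
    rw [← hz, this, S.en_one]

lemma corner_bx {i : ι} (hb : be S i = 1) (hx : xx S i = 1) : i = S.d 1 := by
  by_cases heps : Coalgebra.counit (R := ℂ) (S.B i) = 0
  · exfalso
    have h1 : NN S i (i, S.en 1) = 1 := by
      have := xx_one S i
      rwa [hx] at this
    have h2 := antipode_term_zero_l S heps (p := (i, S.en 1))
      (by rw [h1]; exact one_ne_zero)
    rw [show S.en (1 : Gn) = S.d (1 : Gp) from S.en_one, antipode_d1] at h2
    have h3 : S.B i * S.B (S.d 1) = S.B i := by
      have := be_mul S i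
      rwa [hb] at this
    rw [h3] at h2
    exact B_ne S i h2
  · obtain ⟨z, hz⟩ := (S.en_range i).1 heps
    have : xx S (S.en z) = 1 := by rw [hz, hx]
    rw [xx_en] at this
    rw [← hz, this, S.en_one]

end LYZ

end Aux9

section Aux10

namespace LYZ

attribute [local instance] Classical.propDecidable

variable {H : Type} [Ring H] [HopfAlgebra ℂ H] {ι : Type} [Fintype ι]
  {Gp : Type} [Group Gp] [Fintype Gp] {Gn : Type} [Group Gn] [Fintype Gn]
  (S : SetupFull H ι Gp Gn)

lemma NN_d1_entry (a : Gp) (v : ι) :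
    NN S (S.d 1) (S.d a, v) = if v = S.d a⁻¹ then 1 else 0 := by
  by_cases hv : v = S.d a⁻¹
  · rw [if_pos hv, hv]
    have := NN_d_pair S 1 a
    rwa [mul_one] at this
  · rw [if_neg hv]
    by_contra hnz
    obtain ⟨h, hh⟩ := NN_d_supp S 1 (S.d a, v) hnz
    rw [Prod.mk.injEq] at hh
    have hha : h = a := (S.d_inj hh.1).symm
    have := hh.2
    rw [hha, mul_one] at this
    exact hv this

lemma NN_d1_entry' (a : Gp) (u : ι) :
    NN S (S.d 1) (u, S.d a) = if u = S.d a⁻¹ then 1 else 0 := by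
  by_cases hu : u = S.d a⁻¹
  · rw [if_pos hu, hu]
    have := NN_d_pair S 1 a⁻¹
    rwa [mul_one, inv_inv] at this
  · rw [if_neg hu]
    by_contra hnz
    obtain ⟨h, hh⟩ := NN_d_supp S 1 (u, S.d a) hnz
    rw [Prod.mk.injEq] at hh
    have hha : h⁻¹ = a := by
      have := hh.2
      rw [mul_one] at this
      exact S.d_inj this.symm
    have := hh.1
    rw [← hha, inv_inv] at hu
    exact hu this

lemma ranD_of_w1 {i : ι} (hw : ww S i = 1) : i = S.d (al S i) := by
  set g : Gp := al S i with hg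
  have hstep : ∀ v : ι, v ≠ S.d 1 → NN S i (S.d g, v) = 0 := by
    intro v hv
    by_contra hnz
    have h1 : al S v = 1 := by
      have := al_balance S hnz
      rw [al_d] at this
      exact mul_left_cancel (a := g) (by rw [this, mul_one])
    have h2 : ww S v = 1 := by
      have := xw_mid S hnz
      rw [xx_d] at this
      exact this.symm
    exact hv (corner_aw S h1 h2)
  have h := coassoc_coeff S i (S.d g) (S.d g⁻¹) i
  have hL : ∑ t, NN S i (S.d g, t) * NN S t (S.d g⁻¹, i) =
      NN S i (S.d g, S.d 1) * NN S (S.d 1) (S.d g⁻¹, i) := by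
    rw [Finset.sum_eq_single (S.d 1)]
    · intro t _ ht
      rw [hstep t ht, zero_mul]
    · intro hmem; exact absurd (Finset.mem_univ _) hmem
  have hR : ∑ t, NN S i (t, i) * NN S t (S.d g, S.d g⁻¹) =
      NN S i (S.d 1, i) * NN S (S.d 1) (S.d g, S.d g⁻¹) := by
    rw [Finset.sum_eq_single (S.d 1)]
    · intro t _ ht
      have : NN S t (S.d g, S.d g⁻¹) = 0 := by
        by_contra hnz
        have h1 : al S t = 1 := by
          have := al_balance S hnz
          rw [al_d, al_d, mul_inv_cancel] at this
          exact this.symm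
        have h2 : ww S t = 1 := by
          have := w_balance S hnz
          rw [ww_d] at this
          exact this.symm
        exact ht (corner_aw S h1 h2)
      rw [this, mul_zero]
    · intro hmem; exact absurd (Finset.mem_univ _) hmem
  have hd1 : NN S (S.d 1) (S.d g, S.d g⁻¹) = 1 := by
    rw [NN_d1_entry, if_pos rfl]
  have hd2 : NN S (S.d 1) (S.d g⁻¹, i) = if i = S.d g then 1 else 0 := by
    have := NN_d1_entry S g⁻¹ i
    rwa [inv_inv] at this
  have hw1 : NN S i (S.d 1, i) = 1 := by
    rw [← S.en_one]
    have := ww_one S i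
    rwa [hw] at this
  rw [hL, hR, hd1, hd2, hw1] at h
  by_cases hi : i = S.d g
  · exact hi
  · rw [if_neg hi, mul_zero] at h
    simp at h

lemma ranD_of_x1 {i : ι} (hx : xx S i = 1) : i = S.d (be S i) := by
  set g : Gp := be S i with hg
  have hstep : ∀ u : ι, u ≠ S.d 1 → NN S i (u, S.d g) = 0 := by
    intro u hu
    by_contra hnz
    have h1 : be S u = 1 := by
      have := be_balance S hnz
      rw [be_d] at this
      exact mul_right_cancel (b := g) (by rw [this, one_mul])
    have h2 : xx S u = 1 := by
      have := xw_mid S hnz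
      rw [ww_d] at this
      exact this
    exact hu (corner_bx S h1 h2)
  have h := coassoc_coeff S i i (S.d g⁻¹) (S.d g)
  have hL : ∑ t, NN S i (i, t) * NN S t (S.d g⁻¹, S.d g) =
      NN S i (i, S.d 1) * NN S (S.d 1) (S.d g⁻¹, S.d g) := by
    rw [Finset.sum_eq_single (S.d 1)]
    · intro t _ ht
      have : NN S t (S.d g⁻¹, S.d g) = 0 := by
        by_contra hnz
        have h1 : be S t = 1 := by
          have := be_balance S hnz
          rw [be_d, be_d, inv_mul_cancel] at this
          exact this.symm
        have h2 : xx S t = 1 := by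
          have := x_balance S hnz
          rw [xx_d] at this
          exact this.symm
        exact ht (corner_bx S h1 h2)
      rw [this, mul_zero]
    · intro hmem; exact absurd (Finset.mem_univ _) hmem
  have hR : ∑ t, NN S i (t, S.d g) * NN S t (i, S.d g⁻¹) =
      NN S i (S.d 1, S.d g) * NN S (S.d 1) (i, S.d g⁻¹) := by
    rw [Finset.sum_eq_single (S.d 1)]
    · intro t _ ht
      rw [hstep t ht, zero_mul]
    · intro hmem; exact absurd (Finset.mem_univ _) hmem
  have hd1 : NN S (S.d 1) (S.d g⁻¹, S.d g) = 1 := by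
    have := NN_d1_entry S g⁻¹ (S.d g)
    rw [inv_inv] at this
    rw [this, if_pos rfl]
  have hd2 : NN S (S.d 1) (i, S.d g⁻¹) = if i = S.d g then 1 else 0 := by
    have := NN_d1_entry' S g⁻¹ i
    rwa [inv_inv] at this
  have hx1 : NN S i (i, S.d 1) = 1 := by
    rw [← S.en_one]
    have := xx_one S i
    rwa [hx] at this
  rw [hL, hR, hd1, hd2, hx1] at h
  by_cases hi : i = S.d g
  · exact hi
  · rw [if_neg hi, mul_zero] at h
    simp at h

lemma en_of_al1 {i : ι} (ha : al S i = 1) : i = S.en (ww S i) := by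
  set w : Gn := ww S i with hwdef
  set x : H := S.B (S.en w⁻¹) * S.B i with hxdef
  have hcoord : ∀ l : ι, l ≠ S.d 1 → co S l x = 0 := by
    intro l hl
    by_contra hnz
    have h1 : al S l = 1 := by
      rw [co_mul_al S hnz, al_en]
    have h2 : ww S l = 1 := by
      rw [co_mul_ww S hnz, ww_en, ← hwdef, inv_mul_cancel]
    exact hl (corner_aw S h1 h2)
  have hx : x = co S (S.d 1) x • S.B (S.d 1) := by
    conv_lhs => rw [expand_H S x]
    rw [Finset.sum_eq_single (S.d 1)]
    · intro l _ hl
      rw [hcoord l hl, zero_smul]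
    · intro hmem; exact absurd (Finset.mem_univ _) hmem
  have hrec : S.B (S.en w) * x = S.B i := by
    rw [hxdef, ← mul_assoc, ee_mul_ee, mul_inv_cancel, S.en_one]
    have := al_mul S i
    rwa [ha] at this
  obtain ⟨cc, hcc⟩ : ∃ cc : ℂ, x = cc • S.B (S.d 1) := ⟨_, hx⟩
  have hmul : S.B (S.en w) * S.B (S.d 1) = S.B (S.en w) := by
    rw [d1_eq_en1, ee_mul_ee, mul_one]
  have hfin : S.B i = cc • S.B (S.en w) := by
    rw [← hrec, hcc, mul_smul_comm, hmul]
  have := congrArg (co S i) hfin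
  rw [co_B, if_pos rfl, map_smul, smul_eq_mul, co_B] at this
  by_cases hi : S.en w = i
  · exact hi.symm
  · rw [if_neg hi, mul_zero] at this
    exact absurd this one_ne_zero

lemma en_of_be1 {i : ι} (hb : be S i = 1) : i = S.en (xx S i) := by
  set xv : Gn := xx S i with hxdef'
  set x : H := S.B i * S.B (S.en xv⁻¹) with hxdef
  have hcoord : ∀ l : ι, l ≠ S.d 1 → co S l x = 0 := by
    intro l hl
    by_contra hnz
    have h1 : be S l = 1 := by
      rw [co_mul_be S hnz, be_en]
    have h2 : xx S l = 1 := by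
      rw [co_mul_xx S hnz, xx_en, ← hxdef', mul_inv_cancel]
    exact hl (corner_bx S h1 h2)
  have hx : x = co S (S.d 1) x • S.B (S.d 1) := by
    conv_lhs => rw [expand_H S x]
    rw [Finset.sum_eq_single (S.d 1)]
    · intro l _ hl
      rw [hcoord l hl, zero_smul]
    · intro hmem; exact absurd (Finset.mem_univ _) hmem
  have hrec : x * S.B (S.en xv) = S.B i := by
    rw [hxdef, mul_assoc, ee_mul_ee, inv_mul_cancel, S.en_one]
    have := be_mul S i
    rwa [hb] at this
  obtain ⟨cc, hcc⟩ : ∃ cc : ℂ, x = cc • S.B (S.d 1) := ⟨_, hx⟩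
  have hmul : S.B (S.d 1) * S.B (S.en xv) = S.B (S.en xv) := by
    rw [d1_eq_en1, ee_mul_ee, one_mul]
  have hfin : S.B i = cc • S.B (S.en xv) := by
    rw [← hrec, hcc, smul_mul_assoc, hmul]
  have := congrArg (co S i) hfin
  rw [co_B, if_pos rfl, map_smul, smul_eq_mul, co_B] at this
  by_cases hi : S.en xv = i
  · exact hi.symm
  · rw [if_neg hi, mul_zero] at this
    exact absurd this one_ne_zero

end LYZ

end Aux10

section Aux11

namespace LYZ

attribute [local instance] Classical.propDecidable

variable {H : Type} [Ring H] [HopfAlgebra ℂ H] {ι : Type} [Fintype ι]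
  {Gp : Type} [Group Gp] [Fintype Gp] {Gn : Type} [Group Gn] [Fintype Gn]
  (S : SetupFull H ι Gp Gn)

/-- The map `x ⊗ y ↦ Σ x₁ ⊗ S(x₂) y`, a left inverse of `x ⊗ y ↦ Δ(x)(1 ⊗ y)`. -/
noncomputable def FF : (H ⊗[ℂ] H) →ₗ[ℂ] (H ⊗[ℂ] H) :=
  (LinearMap.lTensor H (LinearMap.mul' ℂ H ∘ₗ
      (HopfAlgebra.antipode (R := ℂ) (A := H)).rTensor H)) ∘ₗ
    (TensorProduct.assoc ℂ H H H).toLinearMap ∘ₗ ((Coalgebra.comul (R := ℂ)).rTensor H)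

/-- The map `x ⊗ y ↦ Σ x S(y₁) ⊗ y₂`, a left inverse of `x ⊗ y ↦ (x ⊗ 1)Δ(y)`. -/
noncomputable def FF4 : (H ⊗[ℂ] H) →ₗ[ℂ] (H ⊗[ℂ] H) :=
  (LinearMap.rTensor H (LinearMap.mul' ℂ H ∘ₗ
      (HopfAlgebra.antipode (R := ℂ) (A := H)).lTensor H)) ∘ₗ
    (TensorProduct.assoc ℂ H H H).symm.toLinearMap ∘ₗ ((Coalgebra.comul (R := ℂ)).lTensor H)

lemma FF_comul (h : H) : FF (Coalgebra.comul (R := ℂ) h) = h ⊗ₜ[ℂ] 1 := by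
  rw [FF, LinearMap.comp_apply, LinearMap.comp_apply, LinearEquiv.coe_toLinearMap,
    Coalgebra.coassoc_apply,
    show (LinearMap.lTensor H (LinearMap.mul' ℂ H ∘ₗ
        (HopfAlgebra.antipode (R := ℂ) (A := H)).rTensor H))
        ((Coalgebra.comul (R := ℂ)).lTensor H (Coalgebra.comul (R := ℂ) h)) =
      (LinearMap.lTensor H ((LinearMap.mul' ℂ H ∘ₗ
        (HopfAlgebra.antipode (R := ℂ) (A := H)).rTensor H) ∘ₗ (Coalgebra.comul (R := ℂ))))
        (Coalgebra.comul (R := ℂ) h) from by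
      rw [← LinearMap.comp_apply, ← LinearMap.lTensor_comp],
    show (LinearMap.mul' ℂ H ∘ₗ
        (HopfAlgebra.antipode (R := ℂ) (A := H)).rTensor H) ∘ₗ (Coalgebra.comul (R := ℂ)) =
      (Algebra.linearMap ℂ H) ∘ₗ (Coalgebra.counit (R := ℂ)) from by
      rw [LinearMap.comp_assoc]
      exact HopfAlgebra.mul_antipode_rTensor_comul,
    LinearMap.lTensor_comp, LinearMap.comp_apply, Coalgebra.lTensor_counit_comul,
    LinearMap.lTensor_tmul, Algebra.linearMap_apply, map_one]

lemma FF4_comul (h : H) : FF4 (Coalgebra.comul (R := ℂ) h) = (1 : H) ⊗ₜ[ℂ] h := by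
  rw [FF4, LinearMap.comp_apply, LinearMap.comp_apply, LinearEquiv.coe_toLinearMap,
    Coalgebra.coassoc_symm_apply,
    show (LinearMap.rTensor H (LinearMap.mul' ℂ H ∘ₗ
        (HopfAlgebra.antipode (R := ℂ) (A := H)).lTensor H))
        ((Coalgebra.comul (R := ℂ)).rTensor H (Coalgebra.comul (R := ℂ) h)) =
      (LinearMap.rTensor H ((LinearMap.mul' ℂ H ∘ₗ
        (HopfAlgebra.antipode (R := ℂ) (A := H)).lTensor H) ∘ₗ (Coalgebra.comul (R := ℂ))))
        (Coalgebra.comul (R := ℂ) h) from by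
      rw [← LinearMap.comp_apply, ← LinearMap.rTensor_comp],
    show (LinearMap.mul' ℂ H ∘ₗ
        (HopfAlgebra.antipode (R := ℂ) (A := H)).lTensor H) ∘ₗ (Coalgebra.comul (R := ℂ)) =
      (Algebra.linearMap ℂ H) ∘ₗ (Coalgebra.counit (R := ℂ)) from by
      rw [LinearMap.comp_assoc]
      exact HopfAlgebra.mul_antipode_lTensor_comul,
    LinearMap.rTensor_comp, LinearMap.comp_apply, Coalgebra.rTensor_counit_comul,
    LinearMap.rTensor_tmul, Algebra.linearMap_apply, map_one]

lemma FF_mul_right (Z : H ⊗[ℂ] H) (y : H) : FF (Z * ((1 : H) ⊗ₜ[ℂ] y)) = FF Z * ((1 : H) ⊗ₜ[ℂ] y) := by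
  have hinner : ∀ (C : H ⊗[ℂ] H) (v : H),
      (LinearMap.lTensor H (LinearMap.mul' ℂ H ∘ₗ
        (HopfAlgebra.antipode (R := ℂ) (A := H)).rTensor H))
        (TensorProduct.assoc ℂ H H H (C ⊗ₜ[ℂ] (v * y))) =
      (LinearMap.lTensor H (LinearMap.mul' ℂ H ∘ₗ
        (HopfAlgebra.antipode (R := ℂ) (A := H)).rTensor H))
        (TensorProduct.assoc ℂ H H H (C ⊗ₜ[ℂ] v)) * ((1 : H) ⊗ₜ[ℂ] y) := by
    intro C v
    induction C using TensorProduct.induction_on with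
    | zero =>
        rw [TensorProduct.zero_tmul, TensorProduct.zero_tmul, LinearEquiv.map_zero,
          map_zero, zero_mul]
    | tmul a b =>
        rw [TensorProduct.assoc_tmul, TensorProduct.assoc_tmul, LinearMap.lTensor_tmul,
          LinearMap.lTensor_tmul, LinearMap.comp_apply, LinearMap.comp_apply,
          LinearMap.rTensor_tmul, LinearMap.rTensor_tmul, LinearMap.mul'_apply,
          LinearMap.mul'_apply, Algebra.TensorProduct.tmul_mul_tmul, mul_one, mul_assoc]
    | add C1 C2 ih1 ih2 =>
        rw [TensorProduct.add_tmul, TensorProduct.add_tmul, map_add, map_add, map_add,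
          map_add, ih1, ih2, add_mul]
  induction Z using TensorProduct.induction_on with
  | zero => simp
  | tmul x v =>
      rw [Algebra.TensorProduct.tmul_mul_tmul, mul_one]
      rw [FF, LinearMap.comp_apply, LinearMap.comp_apply, LinearEquiv.coe_toLinearMap,
        LinearMap.rTensor_tmul, LinearMap.comp_apply, LinearMap.comp_apply,
        LinearEquiv.coe_toLinearMap, LinearMap.rTensor_tmul]
      exact hinner _ v
  | add Z1 Z2 ih1 ih2 =>
      rw [add_mul, map_add, map_add, ih1, ih2, add_mul]

lemma FF4_mul_left (Z : H ⊗[ℂ] H) (x : H) : FF4 ((x ⊗ₜ[ℂ] (1 : H)) * Z) = (x ⊗ₜ[ℂ] (1 : H)) * FF4 Z := by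
  have hinner : ∀ (C : H ⊗[ℂ] H) (v : H),
      (LinearMap.rTensor H (LinearMap.mul' ℂ H ∘ₗ
        (HopfAlgebra.antipode (R := ℂ) (A := H)).lTensor H))
        ((TensorProduct.assoc ℂ H H H).symm ((x * v) ⊗ₜ[ℂ] C)) =
      (x ⊗ₜ[ℂ] (1 : H)) * (LinearMap.rTensor H (LinearMap.mul' ℂ H ∘ₗ
        (HopfAlgebra.antipode (R := ℂ) (A := H)).lTensor H))
        ((TensorProduct.assoc ℂ H H H).symm (v ⊗ₜ[ℂ] C)) := by
    intro C v
    induction C using TensorProduct.induction_on with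
    | zero =>
        rw [TensorProduct.tmul_zero, TensorProduct.tmul_zero, LinearEquiv.map_zero,
          map_zero, mul_zero]
    | tmul a b =>
        rw [TensorProduct.assoc_symm_tmul, TensorProduct.assoc_symm_tmul,
          LinearMap.rTensor_tmul, LinearMap.rTensor_tmul, LinearMap.comp_apply,
          LinearMap.comp_apply, LinearMap.lTensor_tmul, LinearMap.lTensor_tmul,
          LinearMap.mul'_apply, LinearMap.mul'_apply,
          Algebra.TensorProduct.tmul_mul_tmul, one_mul, mul_assoc]
    | add C1 C2 ih1 ih2 =>
        rw [TensorProduct.tmul_add, TensorProduct.tmul_add, map_add, map_add, map_add,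
          map_add, ih1, ih2, mul_add]
  induction Z using TensorProduct.induction_on with
  | zero => simp
  | tmul v C' =>
      rw [Algebra.TensorProduct.tmul_mul_tmul, one_mul]
      rw [FF4, LinearMap.comp_apply, LinearMap.comp_apply, LinearEquiv.coe_toLinearMap,
        LinearMap.lTensor_tmul, LinearMap.comp_apply, LinearMap.comp_apply,
        LinearEquiv.coe_toLinearMap, LinearMap.lTensor_tmul]
      exact hinner _ v
  | add Z1 Z2 ih1 ih2 =>
      rw [mul_add, map_add, map_add, ih1, ih2, mul_add]

lemma tmul_B_ne (i j : ι) : S.B i ⊗ₜ[ℂ] S.B j ≠ 0 := by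
  intro h
  have := congrArg (co2 S (i, j)) h
  rw [co2_tmul_B, if_pos ⟨rfl, rfl⟩, map_zero] at this
  exact one_ne_zero this

lemma mul_B_ne_zero {i j : ι} (h : be S i = al S j) : S.B i * S.B j ≠ 0 := by
  intro hz
  have hX : Coalgebra.comul (R := ℂ) (S.B i) * ((1 : H) ⊗ₜ[ℂ] S.B j) = 0 := by
    rw [comul_B S i, Finset.sum_mul]
    refine Finset.sum_eq_zero fun p _ => ?_
    rw [smul_mul_assoc, Algebra.TensorProduct.tmul_mul_tmul, mul_one]
    by_cases hnn : NN S i p = 0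
    · rw [hnn, zero_smul]
    · have hzero : S.B p.2 * S.B j = 0 := by
        by_cases hb : be S p.2 = al S j
        · have hb2 : be S p.2 = be S i := by rw [hb, h]
          have hb1 : be S p.1 = 1 := by
            have hbal := be_balance S (i := i) (u := p.1) (v := p.2) hnn
            rw [hb2] at hbal
            exact mul_right_cancel (b := be S i) (by rw [hbal, one_mul])
          have hp1 : p.1 = S.en (xx S p.1) := en_of_be1 S hb1
          have hp2 : p.2 = i := by
            have hthis : NN S i (S.en (xx S p.1), p.2) ≠ 0 := by
              rw [← hp1]
              exact hnn
            exact (NN_left_char S hthis).1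
          rw [hp2]
          exact hz
        · exact mul_vanish S hb
      rw [hzero, TensorProduct.tmul_zero, smul_zero]
  have hF2 : FF (Coalgebra.comul (R := ℂ) (S.B i) * ((1 : H) ⊗ₜ[ℂ] S.B j)) =
      S.B i ⊗ₜ[ℂ] S.B j := by
    rw [FF_mul_right, FF_comul, Algebra.TensorProduct.tmul_mul_tmul, mul_one, one_mul]
  rw [hX, map_zero] at hF2
  exact tmul_B_ne S i j hF2.symm

lemma exists_term_al (t : Gp) (z : Gn) :
    ∃ p : ι × ι, NN S (S.en z) p ≠ 0 ∧ al S p.1 = t := by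
  by_contra hall
  push_neg at hall
  have hY : (S.B (S.d t) ⊗ₜ[ℂ] (1 : H)) * Coalgebra.comul (R := ℂ) (S.B (S.en z)) = 0 := by
    rw [comul_B S (S.en z), Finset.mul_sum]
    refine Finset.sum_eq_zero fun p _ => ?_
    rw [mul_smul_comm, Algebra.TensorProduct.tmul_mul_tmul, one_mul, d_mul_B]
    by_cases ha : al S p.1 = t
    · have hNN0 : NN S (S.en z) p = 0 := by
        by_contra hnn
        exact hall p hnn ha
      rw [hNN0, zero_smul]
    · rw [if_neg ha, TensorProduct.zero_tmul, smul_zero]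
  have hF2 : FF4 ((S.B (S.d t) ⊗ₜ[ℂ] (1 : H)) * Coalgebra.comul (R := ℂ) (S.B (S.en z))) =
      S.B (S.d t) ⊗ₜ[ℂ] S.B (S.en z) := by
    rw [FF4_mul_left, FF4_comul, Algebra.TensorProduct.tmul_mul_tmul, mul_one, one_mul]
  rw [hY, map_zero] at hF2
  exact tmul_B_ne S (S.d t) (S.en z) hF2.symm

lemma exists_term_be (t : Gp) (z : Gn) :
    ∃ p : ι × ι, NN S (S.en z) p ≠ 0 ∧ be S p.2 = t := by
  by_contra hall
  push_neg at hall
  have hY : Coalgebra.comul (R := ℂ) (S.B (S.en z)) * ((1 : H) ⊗ₜ[ℂ] S.B (S.d t)) = 0 := by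
    rw [comul_B S (S.en z), Finset.sum_mul]
    refine Finset.sum_eq_zero fun p _ => ?_
    rw [smul_mul_assoc, Algebra.TensorProduct.tmul_mul_tmul, mul_one, B_mul_d]
    by_cases hb : be S p.2 = t
    · have hNN0 : NN S (S.en z) p = 0 := by
        by_contra hnn
        exact hall p hnn hb
      rw [hNN0, zero_smul]
    · rw [if_neg hb, TensorProduct.tmul_zero, smul_zero]
  have hF2 : FF (Coalgebra.comul (R := ℂ) (S.B (S.en z)) * ((1 : H) ⊗ₜ[ℂ] S.B (S.d t))) =
      S.B (S.en z) ⊗ₜ[ℂ] S.B (S.d t) := by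
    rw [FF_mul_right, FF_comul, Algebra.TensorProduct.tmul_mul_tmul, mul_one, one_mul]
  rw [hY, map_zero] at hF2
  exact tmul_B_ne S (S.en z) (S.d t) hF2.symm

end LYZ

end Aux11

section Aux12

namespace LYZ

attribute [local instance] Classical.propDecidable

variable {H : Type} [Ring H] [HopfAlgebra ℂ H] {ι : Type} [Fintype ι]
  {Gp : Type} [Group Gp] [Fintype Gp] {Gn : Type} [Group Gn] [Fintype Gn]
  (S : SetupFull H ι Gp Gn)

lemma exists_coord_ne {x : H} (hx : x ≠ 0) : ∃ l : ι, co S l x ≠ 0 := by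
  by_contra hall
  push_neg at hall
  exact hx (S.B.ext_elem fun l => by rw [map_zero, Finsupp.coe_zero, Pi.zero_apply]; exact hall l)

lemma collapse {x : H} {l₀ : ι} (hc : ∀ l : ι, co S l x ≠ 0 → l = l₀) :
    x = co S l₀ x • S.B l₀ := by
  conv_lhs => rw [expand_H S x]
  rw [Finset.sum_eq_single l₀]
  · intro l _ hl
    have : co S l x = 0 := by
      by_contra hnz
      exact hl (hc l hnz)
    rw [this, zero_smul]
  · intro hmem; exact absurd (Finset.mem_univ _) hmem

lemma eq_of_term (i : ι) (p : ι × ι) (hp : NN S (S.en (xx S i)) p ≠ 0)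
    (hap : al S p.2 = al S i) : i = p.2 := by
  obtain ⟨q, hq, hqa⟩ := exists_term_al S (be S i)⁻¹ (xx S i)⁻¹
  -- properties of j := q.2
  have haj : al S q.2 = be S i := by
    have hbal := al_balance S hq
    rw [hqa, al_en] at hbal
    calc al S q.2 = be S i * ((be S i)⁻¹ * al S q.2) := by rw [← mul_assoc, mul_inv_cancel, one_mul]
      _ = be S i := by rw [hbal, mul_one]
  have hxj : xx S q.2 = (xx S i)⁻¹ := by
    have := x_balance S hq
    rwa [xx_en] at this
  -- P := B i * B q.2
  have hP : S.B i * S.B q.2 ≠ 0 := mul_B_ne_zero S haj.symm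
  have hcoP : ∀ l : ι, co S l (S.B i * S.B q.2) ≠ 0 → l = S.d (be S q.2) := by
    intro l hl
    have hx1 : xx S l = 1 := by
      rw [co_mul_xx S hl, hxj, mul_inv_cancel]
    have := ranD_of_x1 S hx1
    rwa [co_mul_be S hl] at this
  obtain ⟨l₀, hl₀⟩ := exists_coord_ne S hP
  have hbj : be S q.2 = al S i := by
    have h1 := co_mul_al S hl₀
    have h2 := hcoP l₀ hl₀
    rw [h2, al_d] at h1
    exact h1
  have hPc : S.B i * S.B q.2 = co S (S.d (al S i)) (S.B i * S.B q.2) • S.B (S.d (al S i)) := by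
    refine collapse S fun l hl => ?_
    rw [hcoP l hl, hbj]
  have hc1 : co S (S.d (al S i)) (S.B i * S.B q.2) ≠ 0 := by
    intro hzz
    rw [hzz, zero_smul] at hPc
    exact hP hPc
  -- j' := p.2
  have hxj' : xx S p.2 = xx S i := by
    have := x_balance S hp
    rwa [xx_en] at this
  -- Q := B q.2 * B p.2
  have hQ : S.B q.2 * S.B p.2 ≠ 0 := mul_B_ne_zero S (by rw [hbj, hap])
  have hcoQ : ∀ l : ι, co S l (S.B q.2 * S.B p.2) ≠ 0 → l = S.d (be S p.2) := by
    intro l hl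
    have hx1 : xx S l = 1 := by
      rw [co_mul_xx S hl, hxj, hxj', inv_mul_cancel]
    have := ranD_of_x1 S hx1
    rwa [co_mul_be S hl] at this
  obtain ⟨l₁, hl₁⟩ := exists_coord_ne S hQ
  have hbj' : be S p.2 = be S i := by
    have h1 := co_mul_al S hl₁
    have h2 := hcoQ l₁ hl₁
    rw [h2, al_d, haj] at h1
    exact h1
  have hQc : S.B q.2 * S.B p.2 =
      co S (S.d (be S i)) (S.B q.2 * S.B p.2) • S.B (S.d (be S i)) := by
    refine collapse S fun l hl => ?_
    rw [hcoQ l hl, hbj']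
  have hc2 : co S (S.d (be S i)) (S.B q.2 * S.B p.2) ≠ 0 := by
    intro hzz
    rw [hzz, zero_smul] at hQc
    exact hQ hQc
  -- associativity
  have hassoc := mul_assoc (S.B i) (S.B q.2) (S.B p.2)
  rw [hPc, hQc, smul_mul_assoc, mul_smul_comm, d_mul_B, B_mul_d, if_pos hap,
    if_pos rfl] at hassoc
  -- hassoc : c1 • B p.2 = c2 • B i
  have := congrArg (co S i) hassoc
  rw [map_smul, map_smul, smul_eq_mul, smul_eq_mul, co_B, co_B, if_pos rfl, mul_one] at this
  by_cases hi : p.2 = i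
  · exact hi.symm
  · rw [if_neg hi, mul_zero] at this
    exact absurd this.symm hc2

lemma eq_of_term_w (i : ι) (p : ι × ι) (hp : NN S (S.en (ww S i)) p ≠ 0)
    (hbp : be S p.1 = be S i) : i = p.1 := by
  obtain ⟨q, hq, hqb⟩ := exists_term_be S (al S i)⁻¹ (ww S i)⁻¹
  -- properties of j := q.1
  have hbj : be S q.1 = al S i := by
    have hbal := be_balance S hq
    rw [hqb, be_en] at hbal
    calc be S q.1 = (be S q.1 * (al S i)⁻¹) * al S i := by rw [mul_assoc, inv_mul_cancel, mul_one]
      _ = al S i := by rw [hbal, one_mul]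
  have hwj : ww S q.1 = (ww S i)⁻¹ := by
    have := w_balance S hq
    rwa [ww_en] at this
  -- P := B q.1 * B i
  have hP : S.B q.1 * S.B i ≠ 0 := mul_B_ne_zero S hbj
  have hcoP : ∀ l : ι, co S l (S.B q.1 * S.B i) ≠ 0 → l = S.d (al S q.1) := by
    intro l hl
    have hw1 : ww S l = 1 := by
      rw [co_mul_ww S hl, hwj, inv_mul_cancel]
    have := ranD_of_w1 S hw1
    rwa [co_mul_al S hl] at this
  obtain ⟨l₀, hl₀⟩ := exists_coord_ne S hP
  have haj : al S q.1 = be S i := by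
    have h1 := co_mul_be S hl₀
    have h2 := hcoP l₀ hl₀
    rw [h2, be_d] at h1
    exact h1
  have hPc : S.B q.1 * S.B i = co S (S.d (be S i)) (S.B q.1 * S.B i) • S.B (S.d (be S i)) := by
    refine collapse S fun l hl => ?_
    rw [hcoP l hl, haj]
  have hc1 : co S (S.d (be S i)) (S.B q.1 * S.B i) ≠ 0 := by
    intro hzz
    rw [hzz, zero_smul] at hPc
    exact hP hPc
  -- j' := p.1
  have hwj' : ww S p.1 = ww S i := by
    have := w_balance S hp
    rwa [ww_en] at this
  -- Q := B p.1 * B q.1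
  have hQ : S.B p.1 * S.B q.1 ≠ 0 := mul_B_ne_zero S (by rw [hbp, ← haj])
  have hcoQ : ∀ l : ι, co S l (S.B p.1 * S.B q.1) ≠ 0 → l = S.d (al S p.1) := by
    intro l hl
    have hw1 : ww S l = 1 := by
      rw [co_mul_ww S hl, hwj, hwj', mul_inv_cancel]
    have := ranD_of_w1 S hw1
    rwa [co_mul_al S hl] at this
  obtain ⟨l₁, hl₁⟩ := exists_coord_ne S hQ
  have haj' : al S p.1 = al S i := by
    have h1 := co_mul_be S hl₁
    have h2 := hcoQ l₁ hl₁
    rw [h2, be_d, hbj] at h1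
    exact h1
  have hQc : S.B p.1 * S.B q.1 =
      co S (S.d (al S i)) (S.B p.1 * S.B q.1) • S.B (S.d (al S i)) := by
    refine collapse S fun l hl => ?_
    rw [hcoQ l hl, haj']
  have hc2 : co S (S.d (al S i)) (S.B p.1 * S.B q.1) ≠ 0 := by
    intro hzz
    rw [hzz, zero_smul] at hQc
    exact hQ hQc
  -- associativity
  have hassoc := (mul_assoc (S.B p.1) (S.B q.1) (S.B i)).symm
  rw [hPc, hQc, smul_mul_assoc, mul_smul_comm, B_mul_d, d_mul_B, if_pos hbp,
    if_pos rfl] at hassoc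
  -- hassoc : c1 • B p.1 = c2 • B i
  have := congrArg (co S i) hassoc
  rw [map_smul, map_smul, smul_eq_mul, smul_eq_mul, co_B, co_B, if_pos rfl, mul_one] at this
  by_cases hi : p.1 = i
  · exact hi.symm
  · rw [if_neg hi, mul_zero] at this
    exact absurd this.symm hc2

end LYZ

end Aux12

section Aux13

namespace LYZ

attribute [local instance] Classical.propDecidable

variable {H : Type} [Ring H] [HopfAlgebra ℂ H] {ι : Type} [Fintype ι]
  {Gp : Type} [Group Gp] [Fintype Gp] {Gn : Type} [Group Gn] [Fintype Gn]
  (S : SetupFull H ι Gp Gn)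

lemma betaMinus_iff (i : ι) (y : Gn) : IsBetaMinus S i y ↔ xx S i = y := by
  constructor
  · rintro ⟨h1, _⟩
    have hnz : NN S i (i, S.en y) ≠ 0 := by
      show (S.B.tensorProduct S.B).repr (Coalgebra.comul (R := ℂ) (S.B i)) (i, S.en y) ≠ 0
      rw [h1]
      exact one_ne_zero
    exact ((NN_right_char S hnz).2).symm
  · intro h
    subst h
    refine ⟨xx_one S i, ?_⟩
    intro y j hyj
    by_contra hnz
    obtain ⟨hj, hy⟩ := NN_right_char S (show NN S i (j, S.en y) ≠ 0 from hnz)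
    exact hyj ⟨hy, hj⟩

lemma alphaMinus_iff (i : ι) (z : Gn) : IsAlphaMinus S i z ↔ ww S i = z := by
  constructor
  · rintro ⟨h1, _⟩
    have hnz : NN S i (S.en z, i) ≠ 0 := by
      show (S.B.tensorProduct S.B).repr (Coalgebra.comul (R := ℂ) (S.B i)) (S.en z, i) ≠ 0
      rw [h1]
      exact one_ne_zero
    exact ((NN_left_char S hnz).2).symm
  · intro h
    subst h
    refine ⟨ww_one S i, ?_⟩
    intro z j hzj
    by_contra hnz
    obtain ⟨hj, hz⟩ := NN_left_char S (show NN S i (S.en z, j) ≠ 0 from hnz)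
    exact hzj ⟨hz, hj⟩

lemma inj_ax {i i' : ι} (ha : al S i = al S i') (hx : xx S i = xx S i') : i = i' := by
  obtain ⟨q, hq, hqa⟩ := exists_term_al S (al S i)⁻¹ (xx S i)
  have hqv : al S q.2 = al S i := by
    have hbal := al_balance S hq
    rw [hqa, al_en] at hbal
    calc al S q.2 = al S i * ((al S i)⁻¹ * al S q.2) := by
          rw [← mul_assoc, mul_inv_cancel, one_mul]
      _ = al S i := by rw [hbal, mul_one]
  have h1 : i = q.2 := eq_of_term S i q hq hqv
  have h2 : i' = q.2 := by
    refine eq_of_term S i' q ?_ ?_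
    · rw [← hx]
      exact hq
    · rw [hqv, ha]
  rw [h1, h2]

lemma inj_bw {i i' : ι} (hb : be S i = be S i') (hw : ww S i = ww S i') : i = i' := by
  obtain ⟨q, hq, hqb⟩ := exists_term_be S (be S i)⁻¹ (ww S i)
  have hqu : be S q.1 = be S i := by
    have hbal := be_balance S hq
    rw [hqb, be_en] at hbal
    calc be S q.1 = (be S q.1 * (be S i)⁻¹) * be S i := by
          rw [mul_assoc, inv_mul_cancel, mul_one]
      _ = be S i := by rw [hbal, one_mul]
  have h1 : i = q.1 := eq_of_term_w S i q hq hqu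
  have h2 : i' = q.1 := by
    refine eq_of_term_w S i' q ?_ ?_
    · rw [← hw]
      exact hq
    · rw [hqu, hb]
  rw [h1, h2]

end LYZ

end Aux13

theorem stmt11 {H : Type} [Ring H] [HopfAlgebra ℂ H] {ι : Type} [Fintype ι]
    {Gp : Type} [Group Gp] [Fintype Gp] {Gn : Type} [Group Gn] [Fintype Gn]
    (S : SetupFull H ι Gp Gn) :
    ∀ (gp : Gp) (gn : Gn),
      -- Δ(e_{g₋}) contains exactly one term c ⊗ b with α₊(c) = g₊⁻¹ and α₊(b) = g₊
      (∃! p : ι × ι,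
        (S.B.tensorProduct S.B).repr
            (Coalgebra.comul (R := ℂ) (S.B (S.en gn))) p ≠ 0 ∧
          IsAlphaPlus S.toSetupPlus p.1 gp⁻¹ ∧ IsAlphaPlus S.toSetupPlus p.2 gp) ∧
      -- and for this term, b is the unique element with α₊(b) = g₊ and β₋(b) = g₋
      (∀ p : ι × ι,
        (S.B.tensorProduct S.B).repr
            (Coalgebra.comul (R := ℂ) (S.B (S.en gn))) p ≠ 0 →
        IsAlphaPlus S.toSetupPlus p.1 gp⁻¹ → IsAlphaPlus S.toSetupPlus p.2 gp →
          IsBetaMinus S p.2 gn ∧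
          ∀ j : ι, IsAlphaPlus S.toSetupPlus j gp → IsBetaMinus S j gn → j = p.2) ∧
      -- consequently b ↦ (α₊(b), β₋(b)) is a bijection from B onto G₊ × G₋
      (∃! i : ι, IsAlphaPlus S.toSetupPlus i gp ∧ IsBetaMinus S i gn) ∧
      -- likewise b ↦ (β₊(b), α₋(b)) is a bijection from B onto G₊ × G₋
      (∃! i : ι, IsBetaPlus S.toSetupPlus i gp ∧ IsAlphaMinus S i gn) := by
  intro gp gn
  obtain ⟨p₀, hp₀, hp₀a⟩ := LYZ.exists_term_al S gp⁻¹ gn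
  have hp₀v : LYZ.al S p₀.2 = gp := by
    have hbal := LYZ.al_balance S hp₀
    rw [hp₀a, LYZ.al_en] at hbal
    calc LYZ.al S p₀.2 = gp * (gp⁻¹ * LYZ.al S p₀.2) := by
          rw [← mul_assoc, mul_inv_cancel, one_mul]
      _ = gp := by rw [hbal, mul_one]
  have hxp₀ : LYZ.xx S p₀.2 = gn := by
    have := LYZ.x_balance S hp₀
    rwa [LYZ.xx_en] at this
  have huniq : ∀ i : ι, LYZ.al S i = gp → LYZ.xx S i = gn → i = p₀.2 := fun i hai hxi =>
    LYZ.inj_ax S (hai.trans hp₀v.symm) (hxi.trans hxp₀.symm)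
  refine ⟨?_, ?_, ?_, ?_⟩
  · -- Goal 1
    refine ⟨p₀, ⟨hp₀, (LYZ.alphaPlus_iff S _ _).2 hp₀a, (LYZ.alphaPlus_iff S _ _).2 hp₀v⟩, ?_⟩
    rintro q ⟨hq, hq1, hq2⟩
    have hq1' := (LYZ.alphaPlus_iff S _ _).1 hq1
    have hq2' := (LYZ.alphaPlus_iff S _ _).1 hq2
    have hxq : LYZ.xx S q.2 = gn := by
      have := LYZ.x_balance S (show LYZ.NN S (S.en gn) q ≠ 0 from hq)
      rwa [LYZ.xx_en] at this
    have hv : q.2 = p₀.2 := huniq q.2 hq2' hxq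
    have hu : q.1 = p₀.1 := by
      refine LYZ.inj_ax S (hq1'.trans hp₀a.symm) ?_
      have e1 := LYZ.xw_mid S (show LYZ.NN S (S.en gn) q ≠ 0 from hq)
      have e2 := LYZ.xw_mid S hp₀
      rw [e1, e2, hv]
    exact Prod.ext hu hv
  · -- Goal 2
    intro p hp h1 h2
    have hxp : LYZ.xx S p.2 = gn := by
      have := LYZ.x_balance S (show LYZ.NN S (S.en gn) p ≠ 0 from hp)
      rwa [LYZ.xx_en] at this
    refine ⟨(LYZ.betaMinus_iff S _ _).2 hxp, ?_⟩
    intro j hj hbm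
    have hj' := (LYZ.alphaPlus_iff S _ _).1 hj
    have hxj := (LYZ.betaMinus_iff S _ _).1 hbm
    have h2' := (LYZ.alphaPlus_iff S _ _).1 h2
    rw [huniq j hj' hxj, huniq p.2 h2' hxp]
  · -- Goal 3
    refine ⟨p₀.2, ⟨(LYZ.alphaPlus_iff S _ _).2 hp₀v, (LYZ.betaMinus_iff S _ _).2 hxp₀⟩, ?_⟩
    rintro j ⟨hj1, hj2⟩
    exact huniq j ((LYZ.alphaPlus_iff S _ _).1 hj1) ((LYZ.betaMinus_iff S _ _).1 hj2)
  · -- Goal 4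
    obtain ⟨q₀, hq₀, hq₀b⟩ := LYZ.exists_term_be S gp⁻¹ gn
    have hq₀u : LYZ.be S q₀.1 = gp := by
      have hbal := LYZ.be_balance S hq₀
      rw [hq₀b, LYZ.be_en] at hbal
      calc LYZ.be S q₀.1 = (LYZ.be S q₀.1 * gp⁻¹) * gp := by
            rw [mul_assoc, inv_mul_cancel, mul_one]
        _ = gp := by rw [hbal, one_mul]
    have hwq₀ : LYZ.ww S q₀.1 = gn := by
      have := LYZ.w_balance S hq₀
      rwa [LYZ.ww_en] at this
    refine ⟨q₀.1, ⟨(LYZ.betaPlus_iff S _ _).2 hq₀u, (LYZ.alphaMinus_iff S _ _).2 hwq₀⟩, ?_⟩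
    rintro j ⟨hj1, hj2⟩
    exact LYZ.inj_bw S (((LYZ.betaPlus_iff S _ _).1 hj1).trans hq₀u.symm)
      (((LYZ.alphaMinus_iff S _ _).1 hj2).trans hwq₀.symm)
end

section
/- In the standard setup for a finite-dimensional Hopf algebra H over ℂ with positive basis B, define for (g₊, g₋) ∈ G₊ × G₋: g₊^{g₋} := β₊(b) and ^{g₊}g₋ := α₋(b), where b is the unique element of B with α₊(b) = g₊ and β₋(b) = g₋. Then (g₊, g₋) ↦ g₊^{g₋} is a right action of the group G₋ on the set G₊, (g₊, g₋) ↦ ^{g₊}g₋ is a left action of the group G₊ on the set G₋, and these two actions satisfy the matching relations ^{g₊}(g₋h₋) = (^{g₊}g₋)·(^{(g₊^{g₋})}h₋) and (h₊g₊)^{g₋} = (h₊^{(^{g₊}g₋)})·(g₊^{g₋}) for all g₊, h₊ ∈ G₊ and g₋, h₋ ∈ G₋. -/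
open scoped TensorProduct ComplexOrder

namespace Stmt15Aux

open Coalgebra HopfAlgebra

variable {H : Type} [Ring H] [HopfAlgebra ℂ H] {ι : Type} [Fintype ι]
  {Gp : Type} [Group Gp] [Fintype Gp] {Gn : Type} [Group Gn] [Fintype Gn]
  (S : SetupFull H ι Gp Gn)

attribute [local instance] Classical.propDecidable

noncomputable def r (i j k : ι) : ℂ :=
  (S.B.tensorProduct S.B).repr (Coalgebra.comul (R := ℂ) (S.B i)) (j, k)

lemma r_nonneg (i j k : ι) : 0 ≤ r S i j k := S.pos.comul_nonneg i j k

lemma B_ne (i : ι) : S.B i ≠ 0 := S.B.ne_zero i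

lemma repr_B (i m : ι) : S.B.repr (S.B i) m = if i = m then 1 else 0 := by
  rw [Module.Basis.repr_self, Finsupp.single_apply]

lemma repr_B_nonneg (i m : ι) : 0 ≤ S.B.repr (S.B i) m := by
  rw [repr_B]; split <;> norm_num

lemma repr_sum_apply {α : Type} (s : Finset α) (f : α → H) (m : ι) :
    S.B.repr (∑ a ∈ s, f a) m = ∑ a ∈ s, S.B.repr (f a) m := by
  rw [map_sum]; exact Finsupp.finset_sum_apply _ _ _

lemma repr_smul_apply (c : ℂ) (v : H) (m : ι) :
    S.B.repr (c • v) m = c * S.B.repr v m := by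
  rw [map_smul]; rfl

lemma comul_B (i : ι) : Coalgebra.comul (R := ℂ) (S.B i)
    = ∑ jk : ι × ι, r S i jk.1 jk.2 • (S.B jk.1 ⊗ₜ[ℂ] S.B jk.2) := by
  conv_lhs => rw [← Module.Basis.sum_repr (S.B.tensorProduct S.B) (Coalgebra.comul (R := ℂ) (S.B i))]
  refine Finset.sum_congr rfl fun jk _ => ?_
  rw [Module.Basis.tensorProduct_apply']
  rfl

lemma idem_aux {a : ℂ} (h : a * a = a) (hne : a ≠ 0) : a = 1 := by
  rcases mul_eq_zero.mp (show a * (a - 1) = 0 by linear_combination h) with h'|h'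
  · exact absurd h' hne
  · linear_combination h'

lemma exists_alphaPlus (i : ι) : ∃ g, IsAlphaPlus S.toSetupPlus i g := by
  classical
  set v : Gp → H := fun g => S.B (S.d g) * S.B i with hv
  have hsum : ∑ g, v g = S.B i := by
    rw [hv, ← Finset.sum_mul, ← S.one_eq, one_mul]
  have hnn : ∀ g m, 0 ≤ S.B.repr (v g) m := fun g m => S.pos.mul_nonneg _ _ _
  have hz : ∀ g m, m ≠ i → S.B.repr (v g) m = 0 := by
    intro g m hm
    have h1 : ∑ g, S.B.repr (v g) m = 0 := by
      rw [← repr_sum_apply, hsum, repr_B, if_neg (Ne.symm hm)]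
    exact (Finset.sum_eq_zero_iff_of_nonneg (fun g _ => hnn g m)).1 h1 g (Finset.mem_univ g)
  have hform : ∀ g, v g = S.B.repr (v g) i • S.B i := by
    intro g
    conv_lhs => rw [← Module.Basis.sum_repr S.B (v g)]
    rw [Finset.sum_eq_single i]
    · intro m _ hm; rw [hz g m hm, zero_smul]
    · intro h; exact absurd (Finset.mem_univ i) h
  have hsq : ∀ g, S.B.repr (v g) i * S.B.repr (v g) i = S.B.repr (v g) i := by
    intro g
    have h2 : S.B (S.d g) * v g = v g := by
      rw [hv]; dsimp only; rw [← mul_assoc, S.d_mul_self]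
    have h3 : S.B (S.d g) * v g = S.B.repr (v g) i • v g := by
      conv_lhs => rw [hform g]
      rw [mul_smul_comm]
    rw [h3] at h2
    set c := S.B.repr (v g) i with hc
    have h4 : (c * c) • S.B i = c • S.B i := by
      calc (c * c) • S.B i = c • (c • S.B i) := mul_smul c c (S.B i)
      _ = c • v g := by rw [← hform]
      _ = v g := h2
      _ = c • S.B i := hform g
    exact smul_left_injective ℂ (B_ne S i) h4
  have hsum1 : ∑ g, S.B.repr (v g) i = 1 := by
    rw [← repr_sum_apply, hsum, repr_B, if_pos rfl]
  obtain ⟨g, -, hg⟩ := Finset.exists_ne_zero_of_sum_ne_zero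
    (by rw [hsum1]; exact one_ne_zero : ∑ g : Gp, S.B.repr (v g) i ≠ 0)
  refine ⟨g, ?_⟩
  have h1 : S.B.repr (v g) i = 1 := idem_aux (hsq g) hg
  have hvg : v g = S.B i := by rw [hform g, h1, one_smul]
  show S.B (S.d g) * S.B i = S.B i
  exact hvg

lemma exists_betaPlus (i : ι) : ∃ g, IsBetaPlus S.toSetupPlus i g := by
  classical
  set v : Gp → H := fun g => S.B i * S.B (S.d g) with hv
  have hsum : ∑ g, v g = S.B i := by
    rw [hv, ← Finset.mul_sum, ← S.one_eq, mul_one]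
  have hnn : ∀ g m, 0 ≤ S.B.repr (v g) m := fun g m => S.pos.mul_nonneg _ _ _
  have hz : ∀ g m, m ≠ i → S.B.repr (v g) m = 0 := by
    intro g m hm
    have h1 : ∑ g, S.B.repr (v g) m = 0 := by
      rw [← repr_sum_apply, hsum, repr_B, if_neg (Ne.symm hm)]
    exact (Finset.sum_eq_zero_iff_of_nonneg (fun g _ => hnn g m)).1 h1 g (Finset.mem_univ g)
  have hform : ∀ g, v g = S.B.repr (v g) i • S.B i := by
    intro g
    conv_lhs => rw [← Module.Basis.sum_repr S.B (v g)]
    rw [Finset.sum_eq_single i]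
    · intro m _ hm; rw [hz g m hm, zero_smul]
    · intro h; exact absurd (Finset.mem_univ i) h
  have hsq : ∀ g, S.B.repr (v g) i * S.B.repr (v g) i = S.B.repr (v g) i := by
    intro g
    have h2 : v g * S.B (S.d g) = v g := by
      rw [hv]; dsimp only; rw [mul_assoc, S.d_mul_self]
    have h3 : v g * S.B (S.d g) = S.B.repr (v g) i • v g := by
      conv_lhs => rw [hform g]
      rw [smul_mul_assoc]
    rw [h3] at h2
    set c := S.B.repr (v g) i with hc
    have h4 : (c * c) • S.B i = c • S.B i := by
      calc (c * c) • S.B i = c • (c • S.B i) := mul_smul c c (S.B i)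
      _ = c • v g := by rw [← hform]
      _ = v g := h2
      _ = c • S.B i := hform g
    exact smul_left_injective ℂ (B_ne S i) h4
  have hsum1 : ∑ g, S.B.repr (v g) i = 1 := by
    rw [← repr_sum_apply, hsum, repr_B, if_pos rfl]
  obtain ⟨g, -, hg⟩ := Finset.exists_ne_zero_of_sum_ne_zero
    (by rw [hsum1]; exact one_ne_zero : ∑ g : Gp, S.B.repr (v g) i ≠ 0)
  refine ⟨g, ?_⟩
  have h1 : S.B.repr (v g) i = 1 := idem_aux (hsq g) hg
  have hvg : v g = S.B i := by rw [hform g, h1, one_smul]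
  show S.B i * S.B (S.d g) = S.B i
  exact hvg

lemma alphaPlus_unique {i : ι} {g g' : Gp} (h1 : IsAlphaPlus S.toSetupPlus i g)
    (h2 : IsAlphaPlus S.toSetupPlus i g') : g = g' := by
  by_contra hne
  apply B_ne S i
  calc S.B i = S.B (S.d g) * (S.B (S.d g') * S.B i) := by rw [h2, h1]
  _ = (S.B (S.d g) * S.B (S.d g')) * S.B i := (mul_assoc _ _ _).symm
  _ = 0 := by rw [S.d_mul_ne g g' hne, zero_mul]

lemma betaPlus_unique {i : ι} {g g' : Gp} (h1 : IsBetaPlus S.toSetupPlus i g)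
    (h2 : IsBetaPlus S.toSetupPlus i g') : g = g' := by
  by_contra hne
  apply B_ne S i
  calc S.B i = (S.B i * S.B (S.d g)) * S.B (S.d g') := by rw [h1, h2]
  _ = S.B i * (S.B (S.d g) * S.B (S.d g')) := mul_assoc _ _ _
  _ = 0 := by rw [S.d_mul_ne g g' hne, mul_zero]

lemma alphaPlus_elim {i : ι} {g : Gp} (h : IsAlphaPlus S.toSetupPlus i g) {g' : Gp}
    (hne : g' ≠ g) : S.B (S.d g') * S.B i = 0 := by
  rw [← h, ← mul_assoc, S.d_mul_ne g' g hne, zero_mul]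

lemma betaPlus_elim {i : ι} {g : Gp} (h : IsBetaPlus S.toSetupPlus i g) {g' : Gp}
    (hne : g ≠ g') : S.B i * S.B (S.d g') = 0 := by
  rw [← h, mul_assoc, S.d_mul_ne g g' hne, mul_zero]

lemma d_alphaPlus (g : Gp) : IsAlphaPlus S.toSetupPlus (S.d g) g := S.d_mul_self g
lemma d_betaPlus (g : Gp) : IsBetaPlus S.toSetupPlus (S.d g) g := S.d_mul_self g

lemma en_alphaPlus (x : Gn) : IsAlphaPlus S.toSetupPlus (S.en x) 1 := by
  show S.B (S.d 1) * S.B (S.en x) = S.B (S.en x)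
  rw [← S.en_one, S.en_mul, one_mul]

lemma en_betaPlus (x : Gn) : IsBetaPlus S.toSetupPlus (S.en x) 1 := by
  show S.B (S.en x) * S.B (S.d 1) = S.B (S.en x)
  rw [← S.en_one, S.en_mul, mul_one]


lemma repr_d_mul_basis (g : Gp) (c m : ι) :
    S.B.repr (S.B (S.d g) * S.B c) m =
      if IsAlphaPlus S.toSetupPlus c g then S.B.repr (S.B c) m else 0 := by
  by_cases h : IsAlphaPlus S.toSetupPlus c g
  · rw [if_pos h]; rw [show S.B (S.d g) * S.B c = S.B c from h]
  · rw [if_neg h]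
    obtain ⟨gc, hgc⟩ := exists_alphaPlus S c
    rw [alphaPlus_elim S hgc (fun e : g = gc => h (by rw [e]; exact hgc))]
    simp

lemma repr_mul_d_basis (g : Gp) (c m : ι) :
    S.B.repr (S.B c * S.B (S.d g)) m =
      if IsBetaPlus S.toSetupPlus c g then S.B.repr (S.B c) m else 0 := by
  by_cases h : IsBetaPlus S.toSetupPlus c g
  · rw [if_pos h]; rw [show S.B c * S.B (S.d g) = S.B c from h]
  · rw [if_neg h]
    obtain ⟨gc, hgc⟩ := exists_betaPlus S c
    rw [betaPlus_elim S hgc (fun e : gc = g => h (by rw [← e]; exact hgc))]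
    simp

lemma repr_d_mul (g : Gp) (v : H) (m : ι) :
    S.B.repr (S.B (S.d g) * v) m =
      if IsAlphaPlus S.toSetupPlus m g then S.B.repr v m else 0 := by
  conv_lhs => rw [← Module.Basis.sum_repr S.B v, Finset.mul_sum]
  rw [repr_sum_apply]
  have hterm : ∀ c, S.B.repr (S.B (S.d g) * (S.B.repr v c • S.B c)) m
      = S.B.repr v c * S.B.repr (S.B (S.d g) * S.B c) m := by
    intro c; rw [mul_smul_comm, repr_smul_apply]
  rw [Finset.sum_congr rfl (fun c _ => hterm c)]
  by_cases hm : IsAlphaPlus S.toSetupPlus m g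
  · rw [if_pos hm, Finset.sum_eq_single m]
    · rw [repr_d_mul_basis, if_pos hm, repr_B, if_pos rfl, mul_one]
    · intro c _ hc
      rw [repr_d_mul_basis]
      by_cases h : IsAlphaPlus S.toSetupPlus c g
      · rw [if_pos h, repr_B, if_neg hc, mul_zero]
      · rw [if_neg h, mul_zero]
    · intro h; exact absurd (Finset.mem_univ m) h
  · rw [if_neg hm]
    apply Finset.sum_eq_zero; intro c _
    rw [repr_d_mul_basis]
    by_cases h : IsAlphaPlus S.toSetupPlus c g
    · rw [if_pos h, repr_B]
      rcases eq_or_ne c m with rfl|hcm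
      · exact absurd h hm
      · rw [if_neg hcm, mul_zero]
    · rw [if_neg h, mul_zero]

lemma repr_mul_d (g : Gp) (v : H) (m : ι) :
    S.B.repr (v * S.B (S.d g)) m =
      if IsBetaPlus S.toSetupPlus m g then S.B.repr v m else 0 := by
  conv_lhs => rw [← Module.Basis.sum_repr S.B v, Finset.sum_mul]
  rw [repr_sum_apply]
  have hterm : ∀ c, S.B.repr ((S.B.repr v c • S.B c) * S.B (S.d g)) m
      = S.B.repr v c * S.B.repr (S.B c * S.B (S.d g)) m := by
    intro c; rw [smul_mul_assoc, repr_smul_apply]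
  rw [Finset.sum_congr rfl (fun c _ => hterm c)]
  by_cases hm : IsBetaPlus S.toSetupPlus m g
  · rw [if_pos hm, Finset.sum_eq_single m]
    · rw [repr_mul_d_basis, if_pos hm, repr_B, if_pos rfl, mul_one]
    · intro c _ hc
      rw [repr_mul_d_basis]
      by_cases h : IsBetaPlus S.toSetupPlus c g
      · rw [if_pos h, repr_B, if_neg hc, mul_zero]
      · rw [if_neg h, mul_zero]
    · intro h; exact absurd (Finset.mem_univ m) h
  · rw [if_neg hm]
    apply Finset.sum_eq_zero; intro c _
    rw [repr_mul_d_basis]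
    by_cases h : IsBetaPlus S.toSetupPlus c g
    · rw [if_pos h, repr_B]
      rcases eq_or_ne c m with rfl|hcm
      · exact absurd h hm
      · rw [if_neg hcm, mul_zero]
    · rw [if_neg h, mul_zero]

lemma counit_B_not {i : ι} (h : ∀ x, S.en x ≠ i) : Coalgebra.counit (R := ℂ) (S.B i) = 0 := by
  by_contra hc
  obtain ⟨x, hx⟩ := (S.en_range i).1 hc
  exact h x hx

lemma sum_over_en (f : ι → ℂ) (hf : ∀ j, (∀ y, S.en y ≠ j) → f j = 0) :
    ∑ j, f j = ∑ y, f (S.en y) := by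
  rw [← Finset.sum_image (g := S.en) (f := f)
    (fun a _ b _ h => S.en_inj h)]
  apply (Finset.sum_subset (Finset.subset_univ _) _).symm
  intro j _ hj
  apply hf
  intro y hy
  exact hj (Finset.mem_image.2 ⟨y, Finset.mem_univ y, hy⟩)

lemma counit_left_identity (i m : ι) :
    ∑ jk : ι × ι, r S i jk.1 jk.2 * (Coalgebra.counit (R := ℂ) (S.B jk.1)
      * S.B.repr (S.B jk.2) m) = S.B.repr (S.B i) m := by
  have h := Coalgebra.rTensor_counit_comul (R := ℂ) (S.B i)
  rw [comul_B] at h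
  have h2 := congrArg (fun t => S.B.repr ((TensorProduct.lid ℂ H) t) m) h
  simp only [map_sum, map_smul, LinearMap.rTensor_tmul, TensorProduct.lid_tmul,
    Finsupp.finset_sum_apply, Finsupp.smul_apply, smul_eq_mul] at h2
  rw [one_mul] at h2
  exact h2

lemma counit_right_identity (i m : ι) :
    ∑ jk : ι × ι, r S i jk.1 jk.2 * (Coalgebra.counit (R := ℂ) (S.B jk.2)
      * S.B.repr (S.B jk.1) m) = S.B.repr (S.B i) m := by
  have h := Coalgebra.lTensor_counit_comul (R := ℂ) (S.B i)
  rw [comul_B] at h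
  have h2 := congrArg (fun t => S.B.repr ((TensorProduct.rid ℂ H) t) m) h
  simp only [map_sum, map_smul, LinearMap.lTensor_tmul, TensorProduct.rid_tmul,
    Finsupp.finset_sum_apply, Finsupp.smul_apply, smul_eq_mul] at h2
  rw [one_mul] at h2
  exact h2

lemma r_en_left_ne {i m : ι} (hm : m ≠ i) (y : Gn) : r S i (S.en y) m = 0 := by
  have h := counit_left_identity S i m
  rw [repr_B, if_neg (Ne.symm hm)] at h
  have hz := (Finset.sum_eq_zero_iff_of_nonneg (fun jk _ => mul_nonneg (r_nonneg S _ _ _)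
    (mul_nonneg (S.pos.counit_nonneg _) (repr_B_nonneg S _ _)))).1 h
    ((S.en y, m)) (Finset.mem_univ _)
  rw [S.en_counit, repr_B, if_pos rfl] at hz
  simpa using hz

lemma r_en_right_ne {i j : ι} (hj : j ≠ i) (y : Gn) : r S i j (S.en y) = 0 := by
  have h := counit_right_identity S i j
  rw [repr_B, if_neg (Ne.symm hj)] at h
  have hz := (Finset.sum_eq_zero_iff_of_nonneg (fun jk _ => mul_nonneg (r_nonneg S _ _ _)
    (mul_nonneg (S.pos.counit_nonneg _) (repr_B_nonneg S _ _)))).1 h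
    ((j, S.en y)) (Finset.mem_univ _)
  rw [S.en_counit, repr_B, if_pos rfl] at hz
  simpa using hz

lemma sum_r_en_left_self (i : ι) : ∑ y, r S i (S.en y) i = 1 := by
  have h := counit_left_identity S i i
  rw [repr_B, if_pos rfl] at h
  rw [Fintype.sum_prod_type] at h
  have h2 : ∀ j : ι, ∑ k, r S i j k * (Coalgebra.counit (R := ℂ) (S.B j) * S.B.repr (S.B k) i)
      = r S i j i * Coalgebra.counit (R := ℂ) (S.B j) := by
    intro j
    rw [Finset.sum_eq_single i]
    · rw [repr_B, if_pos rfl, mul_one]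
    · intro k _ hk; rw [repr_B, if_neg hk, mul_zero, mul_zero]
    · exact fun h => absurd (Finset.mem_univ i) h
  rw [Finset.sum_congr rfl (fun j _ => h2 j)] at h
  rw [sum_over_en S _ (fun j hj => by rw [counit_B_not S hj, mul_zero])] at h
  calc ∑ y, r S i (S.en y) i
      = ∑ y, r S i (S.en y) i * Coalgebra.counit (R := ℂ) (S.B (S.en y)) := by
        refine Finset.sum_congr rfl fun y _ => ?_; rw [S.en_counit, mul_one]
  _ = 1 := h

lemma sum_r_en_right_self (i : ι) : ∑ y, r S i i (S.en y) = 1 := by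
  have h := counit_right_identity S i i
  rw [repr_B, if_pos rfl] at h
  rw [Fintype.sum_prod_type] at h
  have h2 : ∀ j : ι, ∑ k, r S i j k * (Coalgebra.counit (R := ℂ) (S.B k) * S.B.repr (S.B j) i)
      = (if j = i then ∑ k, r S i i k * Coalgebra.counit (R := ℂ) (S.B k) else 0) := by
    intro j
    rcases eq_or_ne j i with rfl|hj
    · rw [if_pos rfl]
      refine Finset.sum_congr rfl fun k _ => ?_
      rw [repr_B, if_pos rfl, mul_one]
    · rw [if_neg hj]
      apply Finset.sum_eq_zero; intro k _
      rw [repr_B, if_neg hj, mul_zero, mul_zero]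
  rw [Finset.sum_congr rfl (fun j _ => h2 j), Finset.sum_ite_eq' Finset.univ i _,
    if_pos (Finset.mem_univ i)] at h
  rw [sum_over_en S _ (fun k hk => by rw [counit_B_not S hk, mul_zero])] at h
  calc ∑ y, r S i i (S.en y)
      = ∑ y, r S i i (S.en y) * Coalgebra.counit (R := ℂ) (S.B (S.en y)) := by
        refine Finset.sum_congr rfl fun y _ => ?_; rw [S.en_counit, mul_one]
  _ = 1 := h

set_option synthInstance.maxHeartbeats 1000000 in
set_option maxHeartbeats 1000000 in
lemma coassoc_coords (i p q s : ι) :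
    ∑ j, r S i j s * r S j p q = ∑ k, r S i p k * r S k q s := by
  have h := Coalgebra.coassoc_apply (R := ℂ) (S.B i)
  rw [comul_B S i] at h
  simp only [map_sum, map_smul, LinearMap.rTensor_tmul, LinearMap.lTensor_tmul, comul_B S,
    TensorProduct.sum_tmul, TensorProduct.tmul_sum, ← TensorProduct.smul_tmul',
    TensorProduct.tmul_smul, TensorProduct.assoc_tmul] at h
  have h2 := congrArg (fun t => (S.B.tensorProduct (S.B.tensorProduct S.B)).repr t (p, (q, s))) h
  simp only [map_sum, map_smul, Finsupp.finset_sum_apply, Finsupp.smul_apply, smul_eq_mul,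
    Module.Basis.tensorProduct_repr_tmul_apply, repr_B] at h2
  simp only [Fintype.sum_prod_type, mul_ite, ite_mul, mul_zero, zero_mul, mul_one, one_mul,
    Finset.sum_ite_eq, Finset.sum_ite_eq', Finset.mem_univ, if_true] at h2
  have collapse2 : ∀ (g : ι → ι → ℂ) (a b : ι),
      (∑ x2 : ι, ∑ x3 : ι, if x2 = a then if x3 = b then g x2 x3 else 0 else 0) = g a b := by
    intro g a b
    rw [Finset.sum_eq_single a]
    · rw [Finset.sum_eq_single b]
      · rw [if_pos rfl, if_pos rfl]
      · intro x3 _ hx3; rw [if_pos rfl, if_neg hx3]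
      · exact fun hb => absurd (Finset.mem_univ b) hb
    · intro x2 _ hx2
      apply Finset.sum_eq_zero; intro x3 _; rw [if_neg hx2]
    · exact fun ha => absurd (Finset.mem_univ a) ha
  have e1 : ∀ x : ι, (∑ x1 : ι, r S i x x1 *
      ∑ x2 : ι, ∑ x3 : ι, if x2 = p then if x3 = q then if x1 = s then r S x x2 x3 else 0 else 0 else 0)
      = r S i x s * r S x p q := by
    intro x
    have hterm : ∀ x1 : ι, r S i x x1 *
        (∑ x2 : ι, ∑ x3 : ι, if x2 = p then if x3 = q then if x1 = s then r S x x2 x3 else 0 else 0 else 0)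
        = if x1 = s then r S i x x1 * r S x p q else 0 := by
      intro x1
      rw [collapse2 (fun a b => if x1 = s then r S x a b else 0) p q]
      by_cases hx1 : x1 = s
      · rw [if_pos hx1, if_pos hx1]
      · rw [if_neg hx1, if_neg hx1, mul_zero]
    rw [Finset.sum_congr rfl fun x1 _ => hterm x1, Finset.sum_ite_eq' Finset.univ s,
      if_pos (Finset.mem_univ s)]
  have e2 : ∀ x : ι, (∑ x1 : ι, r S i x x1 *
      ∑ x2 : ι, ∑ x3 : ι, if x = p then if x2 = q then if x3 = s then r S x1 x2 x3 else 0 else 0 else 0)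
      = if x = p then ∑ x1 : ι, r S i x x1 * r S x1 q s else 0 := by
    intro x
    by_cases hx : x = p
    · rw [if_pos hx]
      refine Finset.sum_congr rfl fun x1 _ => ?_
      congr 1
      calc (∑ x2 : ι, ∑ x3 : ι, if x = p then if x2 = q then if x3 = s then r S x1 x2 x3 else 0 else 0 else 0)
          = ∑ x2 : ι, ∑ x3 : ι, if x2 = q then if x3 = s then r S x1 x2 x3 else 0 else 0 := by
            refine Finset.sum_congr rfl fun x2 _ => Finset.sum_congr rfl fun x3 _ => ?_
            rw [if_pos hx]
      _ = r S x1 q s := collapse2 (fun a b => r S x1 a b) q s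
    · rw [if_neg hx]
      apply Finset.sum_eq_zero; intro x1 _
      have : (∑ x2 : ι, ∑ x3 : ι, if x = p then if x2 = q then if x3 = s then r S x1 x2 x3 else 0 else 0 else 0) = 0 := by
        apply Finset.sum_eq_zero; intro x2 _
        apply Finset.sum_eq_zero; intro x3 _
        rw [if_neg hx]
      rw [this, mul_zero]
  rw [Finset.sum_congr rfl fun x _ => e1 x] at h2
  rw [Finset.sum_congr rfl fun x _ => e2 x] at h2
  rw [Finset.sum_ite_eq' Finset.univ p, if_pos (Finset.mem_univ p)] at h2
  exact h2

lemma alphaMinus_unique {i : ι} {x x' : Gn} (h1 : IsAlphaMinus S i x)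
    (h2 : IsAlphaMinus S i x') : x = x' := by
  by_contra hne
  have hz := h2.2 x i (fun h => hne h.1)
  have h1' := h1.1
  rw [hz] at h1'
  exact zero_ne_one h1'

lemma betaMinus_unique {i : ι} {x x' : Gn} (h1 : IsBetaMinus S i x)
    (h2 : IsBetaMinus S i x') : x = x' := by
  by_contra hne
  have hz := h2.2 x i (fun h => hne h.1)
  have h1' := h1.1
  rw [hz] at h1'
  exact zero_ne_one h1'

lemma r_en_en_diag (w y : Gn) : r S (S.en w) (S.en y) (S.en w) = if y = w then 1 else 0 := by
  rcases eq_or_ne y w with rfl|hy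
  · rw [if_pos rfl]
    have hsum := sum_r_en_left_self S (S.en y)
    rw [Finset.sum_eq_single y] at hsum
    · exact hsum
    · intro y' _ hy'
      exact r_en_right_ne S (fun e => hy' (S.en_inj e)) y
    · exact fun h => absurd (Finset.mem_univ y) h
  · rw [if_neg hy]
    exact r_en_right_ne S (fun e => hy (S.en_inj e)) w

lemma en_isAlphaMinus (w : Gn) : IsAlphaMinus S (S.en w) w := by
  constructor
  · show r S (S.en w) (S.en w) (S.en w) = 1
    rw [r_en_en_diag, if_pos rfl]
  · intro y j hyj
    show r S (S.en w) (S.en y) j = 0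
    rcases eq_or_ne j (S.en w) with rfl|hj
    · have hyw : y ≠ w := fun e => hyj ⟨e, rfl⟩
      rw [r_en_en_diag, if_neg hyw]
    · exact r_en_left_ne S hj y

lemma en_isBetaMinus (w : Gn) : IsBetaMinus S (S.en w) w := by
  constructor
  · show r S (S.en w) (S.en w) (S.en w) = 1
    rw [r_en_en_diag, if_pos rfl]
  · intro y j hyj
    show r S (S.en w) j (S.en y) = 0
    rcases eq_or_ne j (S.en w) with rfl|hj
    · have hyw : y ≠ w := fun e => hyj ⟨e, rfl⟩
      exact r_en_left_ne S (fun e => hyw (S.en_inj e)) w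
    · exact r_en_right_ne S hj y

lemma exists_isAlphaMinus (i : ι) : ∃ x, IsAlphaMinus S i x := by
  set a : Gn → ℂ := fun y => r S i (S.en y) i with ha
  have hsq : ∀ y, a y * a y = a y := by
    intro y
    have h := coassoc_coords S i (S.en y) (S.en y) i
    rw [Finset.sum_eq_single (S.en y), Finset.sum_eq_single i] at h
    · rw [r_en_en_diag, if_pos rfl, mul_one] at h
      exact h.symm
    · intro k _ hk; rw [r_en_left_ne S hk, zero_mul]
    · exact fun h' => absurd (Finset.mem_univ i) h'
    · intro j _ hj
      rw [r_en_left_ne S (fun e => hj e.symm) y, mul_zero]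
    · exact fun h' => absurd (Finset.mem_univ (S.en y)) h'
  have hsum : ∑ y, a y = 1 := sum_r_en_left_self S i
  obtain ⟨x, -, hx⟩ := Finset.exists_ne_zero_of_sum_ne_zero
    (by rw [hsum]; exact one_ne_zero : ∑ y : Gn, a y ≠ 0)
  have hx1 : a x = 1 := idem_aux (hsq x) hx
  have hrest : ∑ y ∈ Finset.univ.erase x, a y = 0 := by
    have h' := hsum
    rw [← Finset.add_sum_erase _ a (Finset.mem_univ x), hx1] at h'
    linear_combination h'
  refine ⟨x, hx1, ?_⟩
  intro y j hyj
  show r S i (S.en y) j = 0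
  rcases eq_or_ne j i with rfl|hj
  · have hyx : y ≠ x := fun e => hyj ⟨e, rfl⟩
    exact (Finset.sum_eq_zero_iff_of_nonneg (fun y' _ => r_nonneg S _ _ _)).1 hrest y
      (Finset.mem_erase.2 ⟨hyx, Finset.mem_univ y⟩)
  · exact r_en_left_ne S hj y

lemma exists_isBetaMinus (i : ι) : ∃ x, IsBetaMinus S i x := by
  set a : Gn → ℂ := fun y => r S i i (S.en y) with ha
  have hsq : ∀ y, a y * a y = a y := by
    intro y
    have h := coassoc_coords S i i (S.en y) (S.en y)
    rw [Finset.sum_eq_single i, Finset.sum_eq_single (S.en y)] at h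
    · rw [r_en_en_diag, if_pos rfl, mul_one] at h
      exact h
    · intro k _ hk
      rw [r_en_left_ne S (fun e => hk e.symm) y, mul_zero]
    · exact fun h' => absurd (Finset.mem_univ (S.en y)) h'
    · intro j _ hj; rw [r_en_right_ne S hj, zero_mul]
    · exact fun h' => absurd (Finset.mem_univ i) h'
  have hsum : ∑ y, a y = 1 := sum_r_en_right_self S i
  obtain ⟨x, -, hx⟩ := Finset.exists_ne_zero_of_sum_ne_zero
    (by rw [hsum]; exact one_ne_zero : ∑ y : Gn, a y ≠ 0)
  have hx1 : a x = 1 := idem_aux (hsq x) hx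
  have hrest : ∑ y ∈ Finset.univ.erase x, a y = 0 := by
    have h' := hsum
    rw [← Finset.add_sum_erase _ a (Finset.mem_univ x), hx1] at h'
    linear_combination h'
  refine ⟨x, hx1, ?_⟩
  intro y j hyj
  show r S i j (S.en y) = 0
  rcases eq_or_ne j i with rfl|hj
  · have hyx : y ≠ x := fun e => hyj ⟨e, rfl⟩
    exact (Finset.sum_eq_zero_iff_of_nonneg (fun y' _ => r_nonneg S _ _ _)).1 hrest y
      (Finset.mem_erase.2 ⟨hyx, Finset.mem_univ y⟩)
  · exact r_en_right_ne S hj y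

lemma betaMinus_coeff {k : ι} {x : Gn} (h : IsBetaMinus S k x) : r S k k (S.en x) = 1 := h.1
lemma betaMinus_coeff_ne {k : ι} {x : Gn} (h : IsBetaMinus S k x) {z : Gn} (hz : z ≠ x) :
    r S k k (S.en z) = 0 := h.2 z k (fun hh => hz hh.1)
lemma alphaMinus_coeff {k : ι} {x : Gn} (h : IsAlphaMinus S k x) : r S k (S.en x) k = 1 := h.1
lemma alphaMinus_coeff_ne {k : ι} {x : Gn} (h : IsAlphaMinus S k x) {z : Gn} (hz : z ≠ x) :
    r S k (S.en z) k = 0 := h.2 z k (fun hh => hz hh.1)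

lemma leg_betaMinus {i j k : ι} (hne : r S i j k ≠ 0) {x x' : Gn}
    (hi : IsBetaMinus S i x) (hk : IsBetaMinus S k x') : x' = x := by
  by_contra hxx
  have h := coassoc_coords S i j k (S.en x')
  have hL : ∑ m, r S i m (S.en x') * r S m j k = r S i i (S.en x') * r S i j k :=
    Finset.sum_eq_single i
      (fun m _ hm => by rw [r_en_right_ne S hm x', zero_mul])
      (fun h' => absurd (Finset.mem_univ i) h')
  have hR : ∑ m, r S i j m * r S m k (S.en x') = r S i j k * r S k k (S.en x') :=
    Finset.sum_eq_single k
      (fun m _ hm => by rw [r_en_right_ne S (fun e : k = m => hm e.symm) x', mul_zero])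
      (fun h' => absurd (Finset.mem_univ k) h')
  rw [hL, hR, betaMinus_coeff S hk, mul_one, betaMinus_coeff_ne S hi hxx, zero_mul] at h
  exact hne h.symm

lemma leg_alphaMinus {i j k : ι} (hne : r S i j k ≠ 0) {x x' : Gn}
    (hi : IsAlphaMinus S i x) (hj : IsAlphaMinus S j x') : x' = x := by
  by_contra hxx
  have h := coassoc_coords S i (S.en x') j k
  have hL : ∑ m, r S i m k * r S m (S.en x') j = r S i j k * r S j (S.en x') j :=
    Finset.sum_eq_single j
      (fun m _ hm => by rw [r_en_left_ne S (fun e : j = m => hm e.symm) x', mul_zero])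
      (fun h' => absurd (Finset.mem_univ j) h')
  have hR : ∑ m, r S i (S.en x') m * r S m j k = r S i (S.en x') i * r S i j k :=
    Finset.sum_eq_single i
      (fun m _ hm => by rw [r_en_left_ne S hm x', zero_mul])
      (fun h' => absurd (Finset.mem_univ i) h')
  rw [hL, hR, alphaMinus_coeff S hj, mul_one, alphaMinus_coeff_ne S hi hxx, zero_mul] at h
  exact hne h

lemma leg_mid {i j k : ι} (hne : r S i j k ≠ 0) {xj xk : Gn}
    (hbj : IsBetaMinus S j xj) (hak : IsAlphaMinus S k xk) : xk = xj := by
  by_contra hxx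
  have h := coassoc_coords S i j (S.en xj) k
  have hL : ∑ m, r S i m k * r S m j (S.en xj) = r S i j k * r S j j (S.en xj) :=
    Finset.sum_eq_single j
      (fun m _ hm => by rw [r_en_right_ne S (fun e : j = m => hm e.symm) xj, mul_zero])
      (fun h' => absurd (Finset.mem_univ j) h')
  have hR : ∑ m, r S i j m * r S m (S.en xj) k = r S i j k * r S k (S.en xj) k :=
    Finset.sum_eq_single k
      (fun m _ hm => by rw [r_en_left_ne S (fun e : k = m => hm e.symm) xj, mul_zero])
      (fun h' => absurd (Finset.mem_univ k) h')
  rw [hL, hR, betaMinus_coeff S hbj, mul_one,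
    alphaMinus_coeff_ne S hak (fun e : xj = xk => hxx e.symm), mul_zero] at h
  exact hne h

lemma leg_alphaPlus {i j k : ι} (hne : r S i j k ≠ 0) {gi gj gk : Gp}
    (hi : IsAlphaPlus S.toSetupPlus i gi) (hj : IsAlphaPlus S.toSetupPlus j gj)
    (hk : IsAlphaPlus S.toSetupPlus k gk) : gj * gk = gi := by
  by_contra hg
  apply hne
  have hcm : Coalgebra.comul (R := ℂ) (S.B i)
      = ∑ h : Gp, ∑ jk' : ι × ι, r S i jk'.1 jk'.2 •
        ((S.B (S.d h) * S.B jk'.1) ⊗ₜ[ℂ] (S.B (S.d (h⁻¹ * gi)) * S.B jk'.2)) := by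
    conv_lhs => rw [← hi]
    rw [show Coalgebra.comul (R := ℂ) (S.B (S.d gi) * S.B i)
        = Coalgebra.comul (R := ℂ) (S.B (S.d gi)) * Coalgebra.comul (R := ℂ) (S.B i) from
      map_mul (Bialgebra.comulAlgHom ℂ H) _ _]
    rw [S.d_comul gi, comul_B S i, Finset.sum_mul]
    refine Finset.sum_congr rfl fun h _ => ?_
    rw [Finset.mul_sum]
    refine Finset.sum_congr rfl fun jk' _ => ?_
    rw [mul_smul_comm, Algebra.TensorProduct.tmul_mul_tmul]
  have hco := congrArg (fun t => (S.B.tensorProduct S.B).repr t (j, k)) hcm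
  simp only [map_sum, Finsupp.finset_sum_apply, map_smul, Finsupp.smul_apply, smul_eq_mul,
    Module.Basis.tensorProduct_repr_tmul_apply] at hco
  show (S.B.tensorProduct S.B).repr (Coalgebra.comul (R := ℂ) (S.B i)) (j, k) = 0
  rw [hco]
  apply Finset.sum_eq_zero; intro h _
  apply Finset.sum_eq_zero; intro jk' _
  rw [repr_d_mul, repr_d_mul]
  by_cases hkk : IsAlphaPlus S.toSetupPlus k (h⁻¹ * gi)
  · by_cases hjh : IsAlphaPlus S.toSetupPlus j h
    · exfalso
      apply hg
      rw [alphaPlus_unique S hj hjh, alphaPlus_unique S hk hkk]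
      group
    · rw [if_neg hjh, mul_zero, mul_zero]
  · rw [if_neg hkk, zero_mul, mul_zero]

lemma leg_betaPlus {i j k : ι} (hne : r S i j k ≠ 0) {gi gj gk : Gp}
    (hi : IsBetaPlus S.toSetupPlus i gi) (hj : IsBetaPlus S.toSetupPlus j gj)
    (hk : IsBetaPlus S.toSetupPlus k gk) : gj * gk = gi := by
  by_contra hg
  apply hne
  have hcm : Coalgebra.comul (R := ℂ) (S.B i)
      = ∑ h : Gp, ∑ jk' : ι × ι, r S i jk'.1 jk'.2 •
        ((S.B jk'.1 * S.B (S.d h)) ⊗ₜ[ℂ] (S.B jk'.2 * S.B (S.d (h⁻¹ * gi)))) := by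
    conv_lhs => rw [← hi]
    rw [show Coalgebra.comul (R := ℂ) (S.B i * S.B (S.d gi))
        = Coalgebra.comul (R := ℂ) (S.B i) * Coalgebra.comul (R := ℂ) (S.B (S.d gi)) from
      map_mul (Bialgebra.comulAlgHom ℂ H) _ _]
    rw [S.d_comul gi, comul_B S i, Finset.mul_sum]
    refine Finset.sum_congr rfl fun h _ => ?_
    rw [Finset.sum_mul]
    refine Finset.sum_congr rfl fun jk' _ => ?_
    rw [smul_mul_assoc, Algebra.TensorProduct.tmul_mul_tmul]
  have hco := congrArg (fun t => (S.B.tensorProduct S.B).repr t (j, k)) hcm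
  simp only [map_sum, Finsupp.finset_sum_apply, map_smul, Finsupp.smul_apply, smul_eq_mul,
    Module.Basis.tensorProduct_repr_tmul_apply] at hco
  show (S.B.tensorProduct S.B).repr (Coalgebra.comul (R := ℂ) (S.B i)) (j, k) = 0
  rw [hco]
  apply Finset.sum_eq_zero; intro h _
  apply Finset.sum_eq_zero; intro jk' _
  rw [repr_mul_d, repr_mul_d]
  by_cases hkk : IsBetaPlus S.toSetupPlus k (h⁻¹ * gi)
  · by_cases hjh : IsBetaPlus S.toSetupPlus j h
    · exfalso
      apply hg
      rw [betaPlus_unique S hj hjh, betaPlus_unique S hk hkk]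
      group
    · rw [if_neg hjh, mul_zero, mul_zero]
  · rw [if_neg hkk, zero_mul, mul_zero]

lemma mul_support_alphaPlus {j m : ι} {v : H} (hne : S.B.repr (S.B j * v) m ≠ 0)
    {g : Gp} (hj : IsAlphaPlus S.toSetupPlus j g) : IsAlphaPlus S.toSetupPlus m g := by
  by_contra hm
  apply hne
  have hrw : S.B j * v = S.B (S.d g) * (S.B j * v) := by rw [← mul_assoc, hj]
  rw [hrw, repr_d_mul, if_neg hm]

lemma mul_support_betaPlus {k m : ι} {v : H} (hne : S.B.repr (v * S.B k) m ≠ 0)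
    {g : Gp} (hk : IsBetaPlus S.toSetupPlus k g) : IsBetaPlus S.toSetupPlus m g := by
  by_contra hm
  apply hne
  have hrw : v * S.B k = (v * S.B k) * S.B (S.d g) := by rw [mul_assoc, hk]
  rw [hrw, repr_mul_d, if_neg hm]

lemma repr_comul_mul (a b m n : ι) :
    (S.B.tensorProduct S.B).repr (Coalgebra.comul (R := ℂ) (S.B a * S.B b)) (m, n) =
    ∑ jk : ι × ι, ∑ j'k' : ι × ι, r S a jk.1 jk.2 * r S b j'k'.1 j'k'.2 *
      (S.B.repr (S.B jk.1 * S.B j'k'.1) m * S.B.repr (S.B jk.2 * S.B j'k'.2) n) := by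
  rw [show Coalgebra.comul (R := ℂ) (S.B a * S.B b)
      = Coalgebra.comul (R := ℂ) (S.B a) * Coalgebra.comul (R := ℂ) (S.B b) from
    map_mul (Bialgebra.comulAlgHom ℂ H) _ _]
  rw [comul_B S a, comul_B S b, Finset.sum_mul_sum]
  simp only [smul_mul_assoc, mul_smul_comm, smul_smul, Algebra.TensorProduct.tmul_mul_tmul,
    map_sum, Finsupp.finset_sum_apply, map_smul, Finsupp.smul_apply, smul_eq_mul,
    Module.Basis.tensorProduct_repr_tmul_apply]
  refine Finset.sum_congr rfl fun jk _ => Finset.sum_congr rfl fun j'k' _ => ?_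
  ring

lemma repr_comul_mul_zero {a b : ι} (m : ι) {z : Gn}
    (hz : ∀ xm : Gn, IsBetaMinus S m xm → z ≠ xm) :
    (S.B.tensorProduct S.B).repr (Coalgebra.comul (R := ℂ) (S.B a * S.B b)) (m, S.en z) = 0 := by
  conv_lhs => rw [← Module.Basis.sum_repr S.B (S.B a * S.B b)]
  rw [map_sum, map_sum, Finsupp.finset_sum_apply]
  apply Finset.sum_eq_zero; intro c _
  rw [map_smul, map_smul, Finsupp.smul_apply, smul_eq_mul]
  rcases eq_or_ne c m with rfl|hc
  · obtain ⟨xc, hxc⟩ := exists_isBetaMinus S c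
    rw [show (S.B.tensorProduct S.B).repr (Coalgebra.comul (R := ℂ) (S.B c)) (c, S.en z) = 0
      from betaMinus_coeff_ne S hxc (hz xc hxc), mul_zero]
  · rw [show (S.B.tensorProduct S.B).repr (Coalgebra.comul (R := ℂ) (S.B c)) (m, S.en z) = 0
      from r_en_right_ne S (fun e : m = c => hc e.symm) z, mul_zero]

lemma repr_comul_mul_zero' {a b : ι} (m : ι) {z : Gn}
    (hz : ∀ xm : Gn, IsAlphaMinus S m xm → z ≠ xm) :
    (S.B.tensorProduct S.B).repr (Coalgebra.comul (R := ℂ) (S.B a * S.B b)) (S.en z, m) = 0 := by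
  conv_lhs => rw [← Module.Basis.sum_repr S.B (S.B a * S.B b)]
  rw [map_sum, map_sum, Finsupp.finset_sum_apply]
  apply Finset.sum_eq_zero; intro c _
  rw [map_smul, map_smul, Finsupp.smul_apply, smul_eq_mul]
  rcases eq_or_ne c m with rfl|hc
  · obtain ⟨xc, hxc⟩ := exists_isAlphaMinus S c
    rw [show (S.B.tensorProduct S.B).repr (Coalgebra.comul (R := ℂ) (S.B c)) (S.en z, c) = 0
      from alphaMinus_coeff_ne S hxc (hz xc hxc), mul_zero]
  · rw [show (S.B.tensorProduct S.B).repr (Coalgebra.comul (R := ℂ) (S.B c)) (S.en z, m) = 0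
      from r_en_left_ne S (fun e : m = c => hc e.symm) z, mul_zero]

lemma mul_term_nonneg (a b : ι) (m n : ι) (jk j'k' : ι × ι) :
    0 ≤ r S a jk.1 jk.2 * r S b j'k'.1 j'k'.2 *
      (S.B.repr (S.B jk.1 * S.B j'k'.1) m * S.B.repr (S.B jk.2 * S.B j'k'.2) n) :=
  mul_nonneg (mul_nonneg (r_nonneg S _ _ _) (r_nonneg S _ _ _))
    (mul_nonneg (S.pos.mul_nonneg _ _ _) (S.pos.mul_nonneg _ _ _))

lemma double_single_le {f : ι × ι → ι × ι → ℂ} (hf : ∀ u v, 0 ≤ f u v) (u v : ι × ι) :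
    f u v ≤ ∑ x : ι × ι, ∑ y : ι × ι, f x y :=
  le_trans (Finset.single_le_sum (fun y _ => hf u y) (Finset.mem_univ v))
    (Finset.single_le_sum (fun x _ => Finset.sum_nonneg fun y _ => hf x y) (Finset.mem_univ u))

lemma mul_support_betaMinus {a b m : ι} (hne : S.B.repr (S.B a * S.B b) m ≠ 0)
    {xa xb xm : Gn} (ha : IsBetaMinus S a xa) (hb : IsBetaMinus S b xb)
    (hm : IsBetaMinus S m xm) : xm = xa * xb := by
  by_contra hx
  have h1 : (S.B.tensorProduct S.B).repr (Coalgebra.comul (R := ℂ) (S.B a * S.B b))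
      (m, S.en (xa * xb)) = 0 := by
    apply repr_comul_mul_zero
    intro xm' hxm'
    rw [betaMinus_unique S hxm' hm]
    exact fun e => hx e.symm
  have hpos : 0 < S.B.repr (S.B a * S.B b) m :=
    (S.pos.mul_nonneg a b m).lt_of_ne (Ne.symm hne)
  have hle := double_single_le
    (f := fun jk j'k' : ι × ι => r S a jk.1 jk.2 * r S b j'k'.1 j'k'.2 *
      (S.B.repr (S.B jk.1 * S.B j'k'.1) m *
        S.B.repr (S.B jk.2 * S.B j'k'.2) (S.en (xa * xb))))
    (fun u v => mul_term_nonneg S a b m (S.en (xa * xb)) u v)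
    (a, S.en xa) (b, S.en xb)
  have hterm : r S a a (S.en xa) * r S b b (S.en xb) *
      (S.B.repr (S.B a * S.B b) m *
        S.B.repr (S.B (S.en xa) * S.B (S.en xb)) (S.en (xa * xb)))
      = S.B.repr (S.B a * S.B b) m := by
    rw [betaMinus_coeff S ha, betaMinus_coeff S hb, S.en_mul, repr_B, if_pos rfl]
    ring
  rw [hterm, ← repr_comul_mul, h1] at hle
  exact absurd (lt_of_lt_of_le hpos hle) (lt_irrefl 0)

lemma mul_support_alphaMinus {a b m : ι} (hne : S.B.repr (S.B a * S.B b) m ≠ 0)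
    {xa xb xm : Gn} (ha : IsAlphaMinus S a xa) (hb : IsAlphaMinus S b xb)
    (hm : IsAlphaMinus S m xm) : xm = xa * xb := by
  by_contra hx
  have h1 : (S.B.tensorProduct S.B).repr (Coalgebra.comul (R := ℂ) (S.B a * S.B b))
      (S.en (xa * xb), m) = 0 := by
    apply repr_comul_mul_zero'
    intro xm' hxm'
    rw [alphaMinus_unique S hxm' hm]
    exact fun e => hx e.symm
  have hpos : 0 < S.B.repr (S.B a * S.B b) m :=
    (S.pos.mul_nonneg a b m).lt_of_ne (Ne.symm hne)
  have hle := double_single_le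
    (f := fun jk j'k' : ι × ι => r S a jk.1 jk.2 * r S b j'k'.1 j'k'.2 *
      (S.B.repr (S.B jk.1 * S.B j'k'.1) (S.en (xa * xb)) *
        S.B.repr (S.B jk.2 * S.B j'k'.2) m))
    (fun u v => mul_term_nonneg S a b (S.en (xa * xb)) m u v)
    (S.en xa, a) (S.en xb, b)
  have hterm : r S a (S.en xa) a * r S b (S.en xb) b *
      (S.B.repr (S.B (S.en xa) * S.B (S.en xb)) (S.en (xa * xb)) *
        S.B.repr (S.B a * S.B b) m)
      = S.B.repr (S.B a * S.B b) m := by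
    rw [alphaMinus_coeff S ha, alphaMinus_coeff S hb, S.en_mul, repr_B, if_pos rfl]
    ring
  rw [hterm, ← repr_comul_mul, h1] at hle
  exact absurd (lt_of_lt_of_le hpos hle) (lt_irrefl 0)

lemma exists_realizer_pair (g : Gp) (x : Gn) :
    ∃ j k : ι, r S (S.en x) j k ≠ 0 ∧ IsAlphaPlus S.toSetupPlus k g ∧ IsBetaMinus S k x := by
  have hant := HopfAlgebra.mul_antipode_lTensor_comul_apply (R := ℂ) (A := H) (S.B (S.en x))
  rw [S.en_counit x, map_one, comul_B S (S.en x)] at hant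
  rw [S.one_eq] at hant
  have hco := congrArg (fun t => S.B.repr t (S.d g⁻¹)) hant
  simp only [map_sum, map_smul, LinearMap.lTensor_tmul, LinearMap.mul'_apply,
    Finsupp.finset_sum_apply, Finsupp.smul_apply, smul_eq_mul] at hco
  -- hco : ∑ jk, r (en x) jk.1 jk.2 * repr (B jk.1 * antipode (B jk.2)) (d g⁻¹) = ∑ h, repr (B d h) (d g⁻¹)
  have hRHS : ∑ h : Gp, S.B.repr (S.B (S.d h)) (S.d g⁻¹) = 1 := by
    rw [Finset.sum_eq_single g⁻¹]
    · rw [repr_B, if_pos rfl]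
    · intro h _ hh; rw [repr_B, if_neg (fun e => hh (S.d_inj e))]
    · exact fun h' => absurd (Finset.mem_univ g⁻¹) h'
  rw [hRHS] at hco
  obtain ⟨jk, -, hjk⟩ := Finset.exists_ne_zero_of_sum_ne_zero
    (by rw [hco]; exact one_ne_zero : ∑ jk : ι × ι, r S (S.en x) jk.1 jk.2 *
      S.B.repr (S.B jk.1 * HopfAlgebra.antipode (R := ℂ) (S.B jk.2)) (S.d g⁻¹) ≠ 0)
  obtain ⟨hr, hcoeff⟩ := mul_ne_zero_iff.1 hjk
  refine ⟨jk.1, jk.2, hr, ?_, ?_⟩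
  · -- alphaPlus jk.2 = g
    obtain ⟨gj, hgj⟩ := exists_alphaPlus S jk.1
    have hdg : IsAlphaPlus S.toSetupPlus (S.d g⁻¹) gj := mul_support_alphaPlus S hcoeff hgj
    have hgjinv : gj = g⁻¹ := alphaPlus_unique S hdg (d_alphaPlus S g⁻¹)
    obtain ⟨gk, hgk⟩ := exists_alphaPlus S jk.2
    have hmul : gj * gk = 1 := leg_alphaPlus S hr (en_alphaPlus S x) hgj hgk
    have hgkg : gk = g := by
      rw [hgjinv] at hmul
      exact (inv_mul_eq_one.mp hmul).symm
    rw [← hgkg]; exact hgk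
  · obtain ⟨xk, hxk⟩ := exists_isBetaMinus S jk.2
    have hxx : xk = x := leg_betaMinus S hr (en_isBetaMinus S x) hxk
    rw [← hxx]; exact hxk

lemma comul_transport {i j0 k0 : ι} {x : Gn} (hi : IsBetaMinus S i x)
    (h0 : r S (S.en x) j0 k0 ≠ 0) : ∃ m, r S i m k0 ≠ 0 := by
  have h := coassoc_coords S i i j0 k0
  have hterm : 0 < r S (S.en x) j0 k0 := (r_nonneg S _ _ _).lt_of_ne (Ne.symm h0)
  have hRpos : 0 < ∑ k, r S i i k * r S k j0 k0 := by
    have hge : r S i i (S.en x) * r S (S.en x) j0 k0 ≤ ∑ k, r S i i k * r S k j0 k0 :=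
      Finset.single_le_sum (f := fun k => r S i i k * r S k j0 k0)
        (fun k _ => mul_nonneg (r_nonneg S _ _ _) (r_nonneg S _ _ _))
        (Finset.mem_univ (S.en x))
    rw [betaMinus_coeff S hi, one_mul] at hge
    exact lt_of_lt_of_le hterm hge
  rw [← h] at hRpos
  obtain ⟨m, -, hm⟩ := Finset.exists_ne_zero_of_sum_ne_zero
    (show (∑ j : ι, r S i j k0 * r S j i j0) ≠ 0 from fun e => by rw [e] at hRpos; exact lt_irrefl 0 hRpos)
  exact ⟨m, (mul_ne_zero_iff.1 hm).1⟩

lemma mul_eq_zero_of_mismatch {k k' : ι} {g g' : Gp} (hk : IsBetaPlus S.toSetupPlus k g)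
    (hk' : IsAlphaPlus S.toSetupPlus k' g') (hne : g ≠ g') : S.B k * S.B k' = 0 := by
  conv_lhs => rw [← hk, ← hk']
  rw [mul_assoc, ← mul_assoc (S.B (S.d g)), S.d_mul_ne g g' hne, zero_mul, mul_zero]

lemma d_isBetaMinus (g : Gp) : IsBetaMinus S (S.d g) 1 := by
  have hc : ∀ j k : ι, r S (S.d g) j k
      = ∑ h : Gp, (if S.d h = j then 1 else 0) * (if S.d (h⁻¹ * g) = k then 1 else 0) := by
    intro j k
    show (S.B.tensorProduct S.B).repr (Coalgebra.comul (R := ℂ) (S.B (S.d g))) (j, k) = _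
    rw [S.d_comul g, map_sum, Finsupp.finset_sum_apply]
    refine Finset.sum_congr rfl fun h _ => ?_
    rw [Module.Basis.tensorProduct_repr_tmul_apply, smul_eq_mul, repr_B, repr_B]
    ring
  constructor
  · show r S (S.d g) (S.d g) (S.en 1) = 1
    rw [hc, S.en_one, Finset.sum_eq_single g]
    · rw [if_pos rfl, if_pos (by rw [inv_mul_cancel]), mul_one]
    · intro h _ hh; rw [if_neg (fun e => hh (S.d_inj e)), zero_mul]
    · exact fun h' => absurd (Finset.mem_univ g) h'
  · intro y j hyj
    show r S (S.d g) j (S.en y) = 0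
    rw [hc]
    apply Finset.sum_eq_zero; intro h _
    by_cases h2 : S.d (h⁻¹ * g) = S.en y
    · have hcnt : Coalgebra.counit (R := ℂ) (S.B (S.en y)) = 1 := S.en_counit y
      rw [← h2] at hcnt
      have h1g : h⁻¹ * g = 1 := by
        by_contra hne
        rw [S.d_counit_ne _ hne] at hcnt
        exact zero_ne_one hcnt
      have hg : h = g := inv_mul_eq_one.mp h1g
      have hy1 : y = 1 := S.en_inj (by rw [← h2, h1g, S.en_one])
      have hj : j ≠ S.d g := fun e => hyj ⟨hy1, e⟩
      rw [if_neg (by rw [hg]; exact fun e => hj e.symm), zero_mul]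
    · rw [if_neg h2, mul_zero]

end Stmt15Aux

open Stmt15Aux in
theorem stmt15 {H : Type} [Ring H] [HopfAlgebra ℂ H] {ι : Type} [Fintype ι]
    {Gp : Type} [Group Gp] [Fintype Gp] {Gn : Type} [Group Gn] [Fintype Gn]
    (S : SetupFull H ι Gp Gn)
    -- σ g₊ g₋ = g₊^{g₋} and τ g₊ g₋ = ^{g₊}g₋, defined via the unique b ∈ B
    -- with α₊(b) = g₊ and β₋(b) = g₋ by g₊^{g₋} = β₊(b) and ^{g₊}g₋ = α₋(b)
    (σ : Gp → Gn → Gp) (τ : Gp → Gn → Gn)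
    (hστ : ∀ (gp : Gp) (gn : Gn) (b : ι),
      IsAlphaPlus S.toSetupPlus b gp → IsBetaMinus S b gn →
      IsBetaPlus S.toSetupPlus b (σ gp gn) ∧ IsAlphaMinus S b (τ gp gn)) :
    -- (g₊, g₋) ↦ g₊^{g₋} is a right action of G₋ on G₊
    (∀ gp : Gp, σ gp 1 = gp) ∧
    (∀ (gp : Gp) (gn hn : Gn), σ gp (gn * hn) = σ (σ gp gn) hn) ∧
    -- (g₊, g₋) ↦ ^{g₊}g₋ is a left action of G₊ on G₋
    (∀ gn : Gn, τ 1 gn = gn) ∧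
    (∀ (gp hp : Gp) (gn : Gn), τ (gp * hp) gn = τ gp (τ hp gn)) ∧
    -- matching relation ^{g₊}(g₋h₋) = (^{g₊}g₋)·(^{(g₊^{g₋})}h₋)
    (∀ (gp : Gp) (gn hn : Gn), τ gp (gn * hn) = τ gp gn * τ (σ gp gn) hn) ∧
    -- matching relation (h₊g₊)^{g₋} = (h₊^{(^{g₊}g₋)})·(g₊^{g₋})
    (∀ (gp hp : Gp) (gn : Gn), σ (hp * gp) gn = σ hp (τ gp gn) * σ gp gn) := by
  have main1 : ∀ gp : Gp, σ gp 1 = gp := fun gp =>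
    betaPlus_unique S (hστ gp 1 (S.d gp) (d_alphaPlus S gp) (d_isBetaMinus S gp)).1
      (d_betaPlus S gp)
  have main3 : ∀ gn : Gn, τ 1 gn = gn := fun gn =>
    alphaMinus_unique S (hστ 1 gn (S.en gn) (en_alphaPlus S gn) (en_isBetaMinus S gn)).2
      (en_isAlphaMinus S gn)
  have key46 : ∀ (a b : Gp) (gn : Gn),
      τ (a * b) gn = τ a (τ b gn) ∧ σ (a * b) gn = σ a (τ b gn) * σ b gn := by
    intro a b gn
    obtain ⟨j1, i, hri, hiA, hiB⟩ := exists_realizer_pair S (a * b) gn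
    obtain ⟨j0, k, h0, hkA, hkB⟩ := exists_realizer_pair S b gn
    obtain ⟨hiBP, hiAM⟩ := hστ (a * b) gn i hiA hiB
    obtain ⟨hkBP, hkAM⟩ := hστ b gn k hkA hkB
    obtain ⟨m, hm⟩ := comul_transport S hiB h0
    obtain ⟨gm, hgm⟩ := exists_alphaPlus S m
    have hgma : gm = a := mul_right_cancel (leg_alphaPlus S hm hiA hgm hkA)
    rw [hgma] at hgm
    obtain ⟨xm, hxm⟩ := exists_isBetaMinus S m
    rw [← leg_mid S hm hxm hkAM] at hxm
    obtain ⟨hmBP, hmAM⟩ := hστ a (τ b gn) m hgm hxm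
    obtain ⟨am, ham⟩ := exists_isAlphaMinus S m
    have h4 : τ a (τ b gn) = τ (a * b) gn := by
      rw [alphaMinus_unique S hmAM ham, leg_alphaMinus S hm hiAM ham]
    exact ⟨h4.symm, (leg_betaPlus S hm hiBP hmBP hkBP).symm⟩
  have key25 : ∀ (gp : Gp) (gn hn : Gn),
      σ gp (gn * hn) = σ (σ gp gn) hn ∧ τ gp (gn * hn) = τ gp gn * τ (σ gp gn) hn := by
    intro gp gn hn
    obtain ⟨j0, m, h0, hmA, hmB⟩ := exists_realizer_pair S gp (gn * hn)
    obtain ⟨hmBP, hmAM⟩ := hστ gp (gn * hn) m hmA hmB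
    have hprod : (S.B.tensorProduct S.B).repr
        (Coalgebra.comul (R := ℂ) (S.B (S.en gn) * S.B (S.en hn))) (j0, m) ≠ 0 := by
      rw [S.en_mul]
      exact h0
    rw [repr_comul_mul] at hprod
    obtain ⟨jk, -, h1⟩ := Finset.exists_ne_zero_of_sum_ne_zero hprod
    obtain ⟨j'k', -, h2⟩ := Finset.exists_ne_zero_of_sum_ne_zero h1
    obtain ⟨h3, h4⟩ := mul_ne_zero_iff.1 h2
    obtain ⟨hra, hrb⟩ := mul_ne_zero_iff.1 h3
    obtain ⟨-, ht⟩ := mul_ne_zero_iff.1 h4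
    obtain ⟨xk, hxk⟩ := exists_isBetaMinus S jk.2
    rw [leg_betaMinus S hra (en_isBetaMinus S gn) hxk] at hxk
    obtain ⟨xk', hxk'⟩ := exists_isBetaMinus S j'k'.2
    rw [leg_betaMinus S hrb (en_isBetaMinus S hn) hxk'] at hxk'
    obtain ⟨gk, hgk⟩ := exists_alphaPlus S jk.2
    have hmk : IsAlphaPlus S.toSetupPlus m gk := mul_support_alphaPlus S ht hgk
    rw [alphaPlus_unique S hmk hmA] at hgk
    obtain ⟨hkBP, hkAM⟩ := hστ gp gn jk.2 hgk hxk
    obtain ⟨gk', hgk'⟩ := exists_alphaPlus S j'k'.2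
    have hk'eq : σ gp gn = gk' := by
      by_contra hne
      exact ht (by rw [mul_eq_zero_of_mismatch S hkBP hgk' hne]; simp)
    rw [← hk'eq] at hgk'
    obtain ⟨hk'BP, hk'AM⟩ := hστ (σ gp gn) hn j'k'.2 hgk' hxk'
    constructor
    · exact betaPlus_unique S hmBP (mul_support_betaPlus S ht hk'BP)
    · exact mul_support_alphaMinus S ht hkAM hk'AM hmAM
  exact ⟨main1, fun gp gn hn => (key25 gp gn hn).1, main3,
    fun gp hp gn => (key46 gp hp gn).1, fun gp gn hn => (key25 gp gn hn).2,
    fun gp hp gn => (key46 hp gp gn).2⟩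
end
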